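/- arXiv:math/9902042 — 6 statements merged into one kernel-verified Lean document; each statement's English description precedes it below -/
import Mathlib

section
/- Let p be a prime and n ≥ 1 an integer. For every s ∈ ℂ with Re(s) > n, the function x ↦ max(1,‖x‖_p)^{−Re(s)} is integrable on ℚ_p^n with respect to μ, and ∫_{ℚ_p^n} max(1,‖x‖_p)^{−s} dμ(x) = (1 − p^{−s})/(1 − p^{n−s}). -/
open MeasureTheory

noncomputable instance (p : ℕ) [Fact p.Prime] : MeasurableSpace ℚ_[p] := borel _
instance (p : ℕ) [Fact p.Prime] : BorelSpace ℚ_[p] := ⟨rfl⟩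

/-!
Cut `ℚ_p^n` into the shells `{x | max 1 ‖x‖ = p ^ k}`, `k ∈ ℕ`, on which the integrand is the
constant `(p ^ (-s)) ^ k`, so the integral is a power series in `p ^ (-s)`. The shells are
differences of balls, and the ball of radius `p ^ k` has measure `p ^ (n k)` times that of the unit
ball: multiplication by `p` scales Haar measure by a constant, and that constant is `p ^ (-n)`
because the unit ball is the disjoint union of the `p ^ n` translates of `p • closedBall 0 1` by
vectors with entries in `{0, …, p - 1}`. Norms take values in `p ^ ℤ ∪ {0}`, which is what makes
the shells differences of consecutive balls.
-/

open Function Metric Set Pointwise NNReal ENNReal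

/-- The measure of the `k`-th shell relative to the unit ball, for `q = p ^ n`. -/
def shellVolume (q : ℝ) : ℕ → ℝ
  | 0 => 1
  | k + 1 => q ^ (k + 1) - q ^ k

lemma hasSum_shellVolume_mul_pow {𝕜 : Type*} [RCLike 𝕜] {q : ℝ} {x : 𝕜}
    (hx : ‖(q : 𝕜) * x‖ < 1) :
    HasSum (fun k => (shellVolume q k : 𝕜) * x ^ k) ((1 - x) / (1 - q * x)) := by
  have hne : 1 - (q : 𝕜) * x ≠ 0 := by
    intro h
    rw [← eq_of_sub_eq_zero h, norm_one] at hx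
    exact lt_irrefl _ hx
  have htail : HasSum (fun k => (shellVolume q (k + 1) : 𝕜) * x ^ (k + 1))
      ((q - 1) * x * (1 - q * x)⁻¹) := by
    refine ((hasSum_geometric_of_norm_lt_one hx).mul_left ((q - 1) * x)).congr_fun fun k => ?_
    simp only [shellVolume]
    push_cast
    ring
  have hsum : (1 - x) / (1 - q * x) =
      (shellVolume q 0 : 𝕜) * x ^ 0 + (q - 1) * x * (1 - q * x)⁻¹ := by
    simp only [shellVolume, RCLike.ofReal_one, pow_zero, mul_one]
    rw [div_eq_iff hne, add_mul, mul_assoc _ _ (1 - _), inv_mul_cancel₀ hne]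
    ring
  rw [hsum]
  exact htail.zero_add (f := fun k => (shellVolume q k : 𝕜) * x ^ k)

namespace Complex

lemma natCast_pow_mul_cpow_neg {p : ℕ} (hp : (p : ℂ) ≠ 0) (n : ℕ) (s : ℂ) :
    (((p : ℝ) ^ n : ℝ) : ℂ) * (p : ℂ) ^ (-s) = (p : ℂ) ^ ((n : ℂ) - s) := by
  rw [sub_eq_add_neg, cpow_add _ _ hp, cpow_natCast]
  push_cast
  rfl

lemma norm_natCast_pow_mul_cpow_neg_lt_one {p n : ℕ} {s : ℂ} (hp : 1 < p)
    (hs : (n : ℝ) < s.re) :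
    ‖(((p : ℝ) ^ n : ℝ) : ℂ) * (p : ℂ) ^ (-s)‖ < 1 := by
  rw [natCast_pow_mul_cpow_neg (by exact_mod_cast (zero_lt_one.trans hp).ne'),
    norm_natCast_cpow_of_pos (zero_lt_one.trans hp)]
  exact Real.rpow_lt_one_of_one_lt_of_neg (by exact_mod_cast hp) (by simpa using hs)

end Complex

namespace MeasureTheory

variable {X E ι : Type*} [MeasurableSpace X] {μ : Measure X} [NormedAddCommGroup E] [Countable ι]
  {s : ι → Set X} {f : X → E} {c : ι → E}

lemma integrable_of_eqOn_const (hs : ∀ i, MeasurableSet (s i)) (hU : ⋃ i, s i = univ)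
    (hf : ∀ i, EqOn f (fun _ => c i) (s i)) (hμ : ∀ i, μ (s i) ≠ ∞)
    (hsum : Summable fun i => μ.real (s i) * ‖c i‖) : Integrable f μ := by
  have hfi : ∀ i, IntegrableOn f (s i) μ := fun i =>
    (integrableOn_congr_fun (hf i) (hs i)).mpr (integrableOn_const (hμ i))
  rw [← integrableOn_univ, ← hU]
  refine integrableOn_iUnion_of_summable_integral_norm hfi (hsum.congr fun i => ?_)
  rw [setIntegral_congr_fun (hs i) fun x hx => congrArg norm (hf i hx), setIntegral_const,
    smul_eq_mul]

lemma hasSum_integral_of_eqOn_const [NormedSpace ℝ E] [CompleteSpace E]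
    (hs : ∀ i, MeasurableSet (s i)) (hd : Pairwise (Disjoint on s)) (hU : ⋃ i, s i = univ)
    (hf : ∀ i, EqOn f (fun _ => c i) (s i)) (hfi : Integrable f μ) :
    HasSum (fun i => μ.real (s i) • c i) (∫ x, f x ∂μ) := by
  rw [← setIntegral_univ, ← hU]
  convert hasSum_integral_iUnion hs hd (by rw [hU]; exact hfi.integrableOn) using 2 with i
  rw [setIntegral_congr_fun (hs i) (hf i), setIntegral_const]

end MeasureTheory

namespace Padic

variable {p : ℕ} [hp : Fact p.Prime]

lemma exists_norm_sub_natCast_le_inv {x : ℚ_[p]} (hx : ‖x‖ ≤ 1) :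
    ∃ a : Fin p, ‖x - (a : ℕ)‖ ≤ (p : ℝ)⁻¹ := by
  set z : ℤ_[p] := ⟨x, hx⟩
  refine ⟨⟨z.zmodRepr, z.zmodRepr_lt_p⟩, ?_⟩
  have hz : ‖z - z.zmodRepr‖ < 1 := PadicInt.mem_nonunits.mp z.sub_zmodRepr_mem
  rw [← zpow_neg_one, norm_le_pow_iff_norm_lt_pow_add_one, neg_add_cancel, zpow_zero]
  simpa [PadicInt.norm_def] using hz

lemma inv_lt_norm_natCast_sub_natCast {a b : Fin p} (hab : a ≠ b) :
    (p : ℝ)⁻¹ < ‖((a : ℕ) : ℚ_[p]) - (b : ℕ)‖ := by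
  rw [← not_le, ← zpow_neg_one, norm_le_pow_iff_norm_lt_pow_add_one, neg_add_cancel, zpow_zero,
    show ((a : ℕ) : ℚ_[p]) - (b : ℕ) = (((a : ℤ) - b : ℤ) : ℚ_[p]) by push_cast; ring,
    norm_intCast_lt_one_iff]
  intro hdvd
  have := Int.eq_zero_of_abs_lt_dvd hdvd (by rw [abs_lt]; omega)
  exact hab (Fin.ext (by omega))

variable {ι : Type*} [Fintype ι]

lemma exists_pi_norm_eq_zpow {x : ι → ℚ_[p]} (hx : x ≠ 0) : ∃ m : ℤ, ‖x‖ = (p : ℝ) ^ m := by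
  have : Nonempty ι := by
    by_contra h
    exact hx (funext fun i => (not_nonempty_iff.mp h).elim i)
  obtain ⟨i, hi⟩ := Finite.exists_max fun i => ‖x i‖
  have hxi : x i ≠ 0 := fun h => hx (funext fun j => norm_eq_zero.mp
    (le_antisymm (by simpa [h] using hi j) (norm_nonneg _)))
  refine ⟨-(x i).valuation, ?_⟩
  rw [← norm_eq_zpow_neg_valuation hxi]
  exact le_antisymm ((pi_norm_le_iff_of_nonneg (norm_nonneg _)).mpr hi) (norm_le_pi_norm x i)

lemma closedBall_zero_one_eq_iUnion :
    closedBall (0 : ι → ℚ_[p]) 1 =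
      ⋃ v : ι → Fin p, closedBall (fun i => ((v i : ℕ) : ℚ_[p])) (p : ℝ)⁻¹ := by
  have hp1 : (1 : ℝ) ≤ p := by exact_mod_cast hp.out.one_le
  refine subset_antisymm (fun x hx => ?_) (iUnion_subset fun v => ?_)
  · rw [mem_closedBall_zero_iff] at hx
    choose v hv using fun i => exists_norm_sub_natCast_le_inv ((norm_le_pi_norm x i).trans hx)
    exact mem_iUnion.mpr ⟨v, mem_closedBall_iff_norm.mpr
      ((pi_norm_le_iff_of_nonneg (by positivity)).mpr hv)⟩
  · have hv : (fun i => ((v i : ℕ) : ℚ_[p])) ∈ closedBall 0 1 :=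
      mem_closedBall_zero_iff.mpr <| (pi_norm_le_iff_of_nonneg zero_le_one).mpr
        fun i => by simpa using norm_int_le_one (p := p) (v i : ℕ)
    rw [IsUltrametricDist.closedBall_eq_of_mem hv]
    exact closedBall_subset_closedBall (inv_le_one_of_one_le₀ hp1)

lemma pairwise_disjoint_closedBall_natCast :
    Pairwise (Disjoint on fun v : ι → Fin p =>
      closedBall (fun i => ((v i : ℕ) : ℚ_[p])) (p : ℝ)⁻¹) := by
  intro v w hvw
  obtain ⟨i, hi⟩ := Function.ne_iff.mp hvw
  refine (IsUltrametricDist.closedBall_eq_or_disjoint _ _ _).resolve_left fun h => ?_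
  have hw := h ▸ mem_closedBall_self (x := fun i => ((w i : ℕ) : ℚ_[p])) (by positivity)
  have := (dist_le_pi_dist _ _ i).trans (mem_closedBall.mp hw)
  rw [dist_eq_norm] at this
  exact (inv_lt_norm_natCast_sub_natCast hi.symm).not_ge this

lemma smul_closedBall_zero_one (c : ℚ_[p]ˣ) :
    c • closedBall (0 : ι → ℚ_[p]) 1 = closedBall 0 ‖(c : ℚ_[p])‖ := by
  rw [Units.smul_def]
  simpa using smul_closedBall' c.ne_zero (0 : ι → ℚ_[p]) 1

variable (p ι) in
def shell (k : ℕ) : Set (ι → ℚ_[p]) := {x | max 1 ‖x‖ = (p : ℝ) ^ k}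

lemma shell_zero : shell p ι 0 = closedBall 0 1 := by
  ext x
  simp [shell]

lemma shell_succ (k : ℕ) :
    shell p ι (k + 1) = closedBall 0 ((p : ℝ) ^ (k + 1)) \ closedBall 0 ((p : ℝ) ^ k) := by
  have hp1 : (1 : ℝ) < p := by exact_mod_cast hp.out.one_lt
  have h1 : 1 < (p : ℝ) ^ (k + 1) := one_lt_pow₀ hp1 k.succ_ne_zero
  ext x
  simp only [shell, mem_ofPred_eq, mem_sdiff, mem_closedBall_zero_iff, not_le]
  constructor
  · intro hx
    have hx' : ‖x‖ = (p : ℝ) ^ (k + 1) := by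
      rcases le_total ‖x‖ 1 with h | h
      · rw [max_eq_left h] at hx; exact absurd hx h1.ne
      · rwa [max_eq_right h] at hx
    exact ⟨hx'.le, hx' ▸ pow_lt_pow_right₀ hp1 k.lt_succ_self⟩
  · rintro ⟨hle, hlt⟩
    have hx0 : x ≠ 0 := by rintro rfl; simp at hlt; linarith [pow_pos (zero_lt_one.trans hp1) k]
    obtain ⟨m, hm⟩ := exists_pi_norm_eq_zpow hx0
    rw [hm, ← zpow_natCast, zpow_le_zpow_iff_right₀ hp1] at hle
    rw [hm, ← zpow_natCast, zpow_lt_zpow_iff_right₀ hp1] at hlt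
    have : m = ((k + 1 : ℕ) : ℤ) := by omega
    rw [hm, this, zpow_natCast]
    exact max_eq_right h1.le

lemma iUnion_shell : ⋃ k, shell p ι k = univ := by
  have hp1 : (1 : ℝ) < p := by exact_mod_cast hp.out.one_lt
  refine eq_univ_of_forall fun x => mem_iUnion.mpr ?_
  rcases le_or_gt ‖x‖ 1 with h | h
  · exact ⟨0, by simp [shell, h]⟩
  · obtain ⟨m, hm⟩ := exists_pi_norm_eq_zpow (x := x) (by rintro rfl; norm_num at h)
    have hm0 : 0 ≤ m := by
      rw [hm, ← zpow_zero (p : ℝ), zpow_lt_zpow_iff_right₀ hp1] at h; exact h.le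
    refine ⟨m.toNat, ?_⟩
    rw [shell, mem_ofPred_eq, max_eq_right h.le, hm, ← zpow_natCast, Int.toNat_of_nonneg hm0]

lemma pairwise_disjoint_shell : Pairwise (Disjoint on shell p ι) := by
  have hp1 : (1 : ℝ) < p := by exact_mod_cast hp.out.one_lt
  intro j k hjk
  refine disjoint_left.mpr fun x hj hk => hjk ?_
  exact pow_right_injective₀ (zero_lt_one.trans hp1) hp1.ne' (hj.symm.trans hk)

lemma shell_subset_closedBall (k : ℕ) : shell p ι k ⊆ closedBall 0 ((p : ℝ) ^ k) :=
  fun _ hx => mem_closedBall_zero_iff.mpr (hx ▸ le_max_right _ _)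

lemma eqOn_cpow_shell (z : ℂ) (k : ℕ) :
    EqOn (fun x : ι → ℚ_[p] => ((max 1 ‖x‖ : ℝ) : ℂ) ^ z) (fun _ => ((p : ℂ) ^ z) ^ k)
      (shell p ι k) := by
  intro x hx
  simp only [hx.out]
  push_cast
  rw [← Complex.natCast_cpow_natCast_mul, Complex.cpow_nat_mul]

variable [MeasurableSpace (ι → ℚ_[p])] [BorelSpace (ι → ℚ_[p])]

lemma measurableSet_shell (k : ℕ) : MeasurableSet (shell p ι k) :=
  (isClosed_eq (continuous_const.max continuous_norm) continuous_const).measurableSet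

lemma addHaar_closedBall_one_eq_mul (μ : Measure (ι → ℚ_[p])) [μ.IsAddHaarMeasure] :
    μ (closedBall 0 1) = p ^ Fintype.card ι * μ (closedBall 0 (p : ℝ)⁻¹) := by
  classical
  rw [closedBall_zero_one_eq_iUnion, measure_iUnion pairwise_disjoint_closedBall_natCast
    fun _ => measurableSet_closedBall, tsum_fintype]
  simp [Measure.addHaar_closedBall_center]

variable (ι) in
lemma distribHaarChar_p :
    distribHaarChar (ι → ℚ_[p]) (Units.mk0 (p : ℚ_[p]) (by simp [hp.out.ne_zero])) =
      ((p : ℝ≥0) ^ Fintype.card ι)⁻¹ := by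
  set μ : Measure (ι → ℚ_[p]) := Measure.addHaar
  refine distribHaarChar_eq_of_measure_smul_eq_mul (μ := μ) (s := closedBall 0 1)
    (measure_closedBall_pos μ 0 one_pos).ne' measure_closedBall_lt_top.ne ?_
  rw [smul_closedBall_zero_one, Units.val_mk0, norm_p, addHaar_closedBall_one_eq_mul μ,
    ← mul_assoc]
  push_cast
  rw [ENNReal.inv_mul_cancel (by simp [hp.out.ne_zero]) (by simp), one_mul]

lemma addHaar_real_closedBall_zpow (μ : Measure (ι → ℚ_[p])) [μ.IsAddHaarMeasure] (k : ℤ) :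
    μ.real (closedBall 0 ((p : ℝ) ^ k)) =
      ((p : ℝ) ^ Fintype.card ι) ^ k * μ.real (closedBall 0 1) := by
  set u : ℚ_[p]ˣ := Units.mk0 (p : ℚ_[p]) (by simp [hp.out.ne_zero])
  have hball : closedBall (0 : ι → ℚ_[p]) ((p : ℝ) ^ k) = u ^ (-k) • closedBall 0 1 := by
    rw [smul_closedBall_zero_one]
    simp [u]
  rw [measureReal_def, hball, ← distribHaarChar_mul, map_zpow, distribHaarChar_p,
    inv_zpow', neg_neg, ENNReal.toReal_mul, ENNReal.coe_toReal]
  push_cast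
  rfl

lemma measureReal_shell (μ : Measure (ι → ℚ_[p])) [μ.IsAddHaarMeasure] (k : ℕ) :
    μ.real (shell p ι k) =
      shellVolume ((p : ℝ) ^ Fintype.card ι) k * μ.real (closedBall 0 1) := by
  cases k with
  | zero => simp [shell_zero, shellVolume]
  | succ k =>
    have hp1 : (1 : ℝ) ≤ p := by exact_mod_cast hp.out.one_le
    rw [shell_succ,
      measureReal_sdiff (closedBall_subset_closedBall (pow_le_pow_right₀ hp1 k.le_succ))
        measurableSet_closedBall measure_closedBall_lt_top.ne,
      ← zpow_natCast, ← zpow_natCast, addHaar_real_closedBall_zpow, addHaar_real_closedBall_zpow,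
      shellVolume, zpow_natCast, zpow_natCast, sub_mul]

variable {s : ℂ} (μ : Measure (ι → ℚ_[p])) [μ.IsAddHaarMeasure]

lemma integrable_max_one_norm_cpow_neg (hs : (Fintype.card ι : ℝ) < s.re) :
    Integrable (fun x : ι → ℚ_[p] => ((max 1 ‖x‖ : ℝ) : ℂ) ^ (-s)) μ := by
  refine integrable_of_eqOn_const measurableSet_shell iUnion_shell (eqOn_cpow_shell (-s))
    (fun k => measure_ne_top_of_subset (shell_subset_closedBall k)
      measure_closedBall_lt_top.ne) ?_
  have hlt := Complex.norm_natCast_pow_mul_cpow_neg_lt_one hp.out.one_lt hs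
  rw [norm_mul, Complex.norm_real, Real.norm_of_nonneg (by positivity)] at hlt
  refine ((hasSum_shellVolume_mul_pow (q := (p : ℝ) ^ Fintype.card ι)
    (x := ‖(p : ℂ) ^ (-s)‖) (by simpa using hlt)).summable.mul_right
      (μ.real (closedBall 0 1))).congr fun k => ?_
  rw [measureReal_shell, norm_pow]
  simp only [RCLike.ofReal_real_eq_id, id]
  ring

lemma integral_max_one_norm_cpow_neg (hs : (Fintype.card ι : ℝ) < s.re) :
    ∫ x : ι → ℚ_[p], ((max 1 ‖x‖ : ℝ) : ℂ) ^ (-s) ∂μ =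
      μ.real (closedBall 0 1) *
        ((1 - (p : ℂ) ^ (-s)) / (1 - (p : ℂ) ^ ((Fintype.card ι : ℂ) - s))) := by
  have h := hasSum_integral_of_eqOn_const measurableSet_shell pairwise_disjoint_shell iUnion_shell
    (eqOn_cpow_shell (-s)) (integrable_max_one_norm_cpow_neg μ hs)
  rw [← Complex.natCast_pow_mul_cpow_neg (Nat.cast_ne_zero.mpr hp.out.ne_zero)]
  refine h.unique (((hasSum_shellVolume_mul_pow (q := (p : ℝ) ^ Fintype.card ι)
    (Complex.norm_natCast_pow_mul_cpow_neg_lt_one hp.out.one_lt hs)).mul_left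
      (μ.real (closedBall 0 1) : ℂ)).congr_fun fun k => ?_)
  simp only [measureReal_shell, Complex.real_smul, RCLike.ofReal_eq_complex_ofReal]
  push_cast
  ring

end Padic

theorem stmt0_general (p : ℕ) [Fact p.Prime] (n : ℕ)
    (μ : Measure (Fin n → ℚ_[p])) (hμ : μ.IsAddHaarMeasure)
    (hμ1 : μ {x | ∀ i, ‖x i‖ ≤ 1} = 1)
    (s : ℂ) (hs : (n : ℝ) < s.re) :
    Integrable (fun x : Fin n → ℚ_[p] => (max 1 ‖x‖) ^ (-s.re)) μ ∧
    ∫ x : Fin n → ℚ_[p], ((max 1 ‖x‖ : ℝ) : ℂ) ^ (-s) ∂μ =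
      (1 - (p : ℂ) ^ (-s)) / (1 - (p : ℂ) ^ ((n : ℂ) - s)) := by
  have hball : μ.real (closedBall 0 1) = 1 := by
    have : closedBall (0 : Fin n → ℚ_[p]) 1 = {x | ∀ i, ‖x i‖ ≤ 1} := by
      ext x
      simp [pi_norm_le_iff_of_nonneg]
    rw [measureReal_def, this, hμ1, ENNReal.toReal_one]
  have hs' : (Fintype.card (Fin n) : ℝ) < s.re := by rwa [Fintype.card_fin]
  refine ⟨(Padic.integrable_max_one_norm_cpow_neg μ hs').norm.congr
    (ae_of_all _ fun x => ?_), ?_⟩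
  · simp [Complex.norm_cpow_eq_rpow_re_of_pos (zero_lt_one.trans_le (le_max_left 1 ‖x‖))]
  · rw [Padic.integral_max_one_norm_cpow_neg μ hs', hball, Complex.ofReal_one, one_mul,
      Fintype.card_fin]

/-- For a prime `p`, an integer `n ≥ 1`, and the additive Haar
measure `μ` on `ℚ_p^n` normalized by `μ(ℤ_p^n) = 1`, for every complex `s` with
`Re s > n`, the function `x ↦ max(1, ‖x‖_p) ^ (-Re s)` is integrable and
`∫ max(1,‖x‖_p)^(-s) dμ = (1 - p^(-s)) / (1 - p^(n-s))`. -/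
theorem stmt0 (p : ℕ) [Fact p.Prime] (n : ℕ) (hn : 1 ≤ n)
    (μ : Measure (Fin n → ℚ_[p])) (hμ : μ.IsAddHaarMeasure)
    (hμ1 : μ {x | ∀ i, ‖x i‖ ≤ 1} = 1)
    (s : ℂ) (hs : (n : ℝ) < s.re) :
    Integrable (fun x : Fin n → ℚ_[p] => (max 1 ‖x‖) ^ (-s.re)) μ ∧
    ∫ x : Fin n → ℚ_[p], ((max 1 ‖x‖ : ℝ) : ℂ) ^ (-s) ∂μ =
      (1 - (p : ℂ) ^ (-s)) / (1 - (p : ℂ) ^ ((n : ℂ) - s)) :=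
  stmt0_general p n μ hμ hμ1 s hs
end

section
/- Let p be a prime, n ≥ 1 an integer, ψ a standard additive character of ℚ_p, and a = (a_1,…,a_n) ∈ ℤ^n such that p does not divide all of a_1,…,a_n. Then for every s ∈ ℂ with Re(s) > n, ∫_{ℚ_p^n} max(1,‖x‖_p)^{−s} ψ_a(x) dμ(x) = 1 − p^{−s}. -/
/-!
Since `max 1 ‖x‖` is always a power of `p`, the weight has the layer-cake expansion
`max(1, ‖x‖)^(-s) = (1 - p^(-s)) ∑_{j ≥ 0} p^(-js) 1[‖x‖ ≤ p^j]`. The ball `‖x‖ ≤ p^j` is covered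
by `p^(jn)` translates of the unit ball, so for `Re s > n` the series converges in `L¹` and can be
integrated termwise. On the unit ball `ψ_a = 1`, which contributes `1`. A larger ball is invariant
under translation by some `t` with `‖t‖ ≤ p` and `ψ_a(t) ≠ 1` (it exists because `a` is primitive),
and this translation multiplies the integral of `ψ_a` over the ball by `ψ_a(t)`, so that integral
vanishes.
-/

open MeasureTheory

open Metric
open scoped ENNReal

theorem hasSum_ite_le_mul_geometric {K : Type*} [NormedField K] {q : K} (hq : ‖q‖ < 1) (m : ℕ) :
    HasSum (fun j => if m ≤ j then (1 - q) * q ^ j else 0) (q ^ m) := by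
  have hq1 : 1 - q ≠ 0 := sub_ne_zero.mpr fun h => by simp [← h] at hq
  rw [← hasSum_nat_add_iff' m, Finset.sum_eq_zero fun i hi => if_neg (by simpa using hi), sub_zero]
  simp only [le_add_iff_nonneg_left, zero_le, if_true]
  have hterm : (fun j => (1 - q) * q ^ (j + m)) = fun j => (1 - q) * q ^ m * q ^ j := by
    funext j
    ring
  have hsum : q ^ m = (1 - q) * q ^ m * (1 - q)⁻¹ := by field_simp
  have h := (hasSum_geometric_of_norm_lt_one hq).mul_left ((1 - q) * q ^ m)
  rwa [← hsum, ← hterm] at h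

theorem setIntegral_eq_zero_of_add_left_eq_mul {G : Type*} [AddGroup G] [MeasurableSpace G]
    [MeasurableAdd G] (μ : Measure G) [μ.IsAddLeftInvariant] {S : Set G} {t : G}
    (hS : (t + ·) ⁻¹' S = S) {f : G → ℂ} {c : ℂ} (hf : ∀ x, f (t + x) = c * f x) (hc : c ≠ 1) :
    ∫ x in S, f x ∂μ = 0 := by
  have h := (measurePreserving_add_left μ t).setIntegral_preimage_emb
    (measurableEmbedding_addLeft t) f S
  simp only [hS, hf, integral_const_mul] at h
  have h' : (c - 1) * ∫ x in S, f x ∂μ = 0 := by rw [sub_mul, h, one_mul, sub_self]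
  exact (mul_eq_zero.mp h').resolve_left (sub_ne_zero.mpr hc)

namespace Padic

variable {p : ℕ} [Fact p.Prime] {ι : Type*} [Fintype ι]

theorem exists_lt_pow_norm_sub_le_one {y : ℚ_[p]} {j : ℕ} (hy : ‖y‖ ≤ (p : ℝ) ^ j) :
    ∃ k < p ^ j, ‖y - k * (p : ℚ_[p]) ^ (-(j : ℤ))‖ ≤ 1 := by
  have hp : (p : ℝ) ≠ 0 := by exact_mod_cast (Fact.out : p.Prime).ne_zero
  have hz : ‖(p : ℚ_[p]) ^ j * y‖ ≤ 1 := by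
    rw [norm_mul, norm_pow, Padic.norm_p, inv_pow]
    exact inv_mul_le_one_of_le₀ hy (by positivity)
  set z : ℤ_[p] := ⟨_, hz⟩
  refine ⟨z.appr j, z.appr_lt j, ?_⟩
  have happr : ‖z - z.appr j‖ ≤ (p : ℝ) ^ (-(j : ℤ)) :=
    (PadicInt.norm_le_pow_iff_mem_span_pow _ _).mpr (z.appr_spec j)
  have hy' : y - z.appr j * (p : ℚ_[p]) ^ (-(j : ℤ)) =
      ((z - z.appr j : ℤ_[p]) : ℚ_[p]) * (p : ℚ_[p]) ^ (-(j : ℤ)) := by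
    push_cast
    rw [sub_mul]
    congr 1
    change y = (p : ℚ_[p]) ^ j * y * (p : ℚ_[p]) ^ (-(j : ℤ))
    rw [mul_comm _ y, mul_assoc, ← zpow_natCast, ← zpow_add₀ (by exact_mod_cast hp), add_neg_cancel,
      zpow_zero, mul_one]
  rw [hy', norm_mul, Padic.norm_p_zpow, neg_neg, ← PadicInt.norm_def]
  calc ‖z - z.appr j‖ * (p : ℝ) ^ (j : ℤ) ≤ (p : ℝ) ^ (-(j : ℤ)) * (p : ℝ) ^ (j : ℤ) := by gcongr
    _ = 1 := by rw [← zpow_add₀ hp, neg_add_cancel, zpow_zero]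

theorem closedBall_pow_subset_iUnion (j : ℕ) :
    closedBall (0 : ι → ℚ_[p]) ((p : ℝ) ^ j) ⊆
      ⋃ k : ι → Fin (p ^ j), closedBall (fun i => (k i : ℚ_[p]) * (p : ℚ_[p]) ^ (-(j : ℤ))) 1 := by
  intro x hx
  rw [mem_closedBall_zero_iff, pi_norm_le_iff_of_nonneg (by positivity)] at hx
  choose k hk hxk using fun i => exists_lt_pow_norm_sub_le_one (hx i)
  refine Set.mem_iUnion.mpr ⟨fun i => ⟨k i, hk i⟩, ?_⟩
  rw [mem_closedBall, dist_eq_norm, pi_norm_le_iff_of_nonneg zero_le_one]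
  exact hxk

theorem measure_closedBall_pow_le (μ : Measure (ι → ℚ_[p])) [μ.IsAddLeftInvariant] (j : ℕ) :
    μ (closedBall 0 ((p : ℝ) ^ j)) ≤ (p : ℝ≥0∞) ^ (j * Fintype.card ι) * μ (closedBall 0 1) := by
  classical
  calc μ (closedBall 0 ((p : ℝ) ^ j))
      ≤ ∑ k : ι → Fin (p ^ j),
          μ (closedBall (fun i => (k i : ℚ_[p]) * (p : ℚ_[p]) ^ (-(j : ℤ))) 1) :=
        (measure_mono (closedBall_pow_subset_iUnion j)).trans (measure_iUnion_fintype_le _ _)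
    _ = ∑ _k : ι → Fin (p ^ j), μ (closedBall 0 1) := by
        congr! 1 with k
        rw [← measure_preimage_add μ (-(fun i => (k i : ℚ_[p]) * (p : ℚ_[p]) ^ (-(j : ℤ))))
          (closedBall 0 1), preimage_add_closedBall, zero_sub, neg_neg]
    _ = (p : ℝ≥0∞) ^ (j * Fintype.card ι) * μ (closedBall 0 1) := by
        simp [pow_mul]

theorem tsum_pow_mul_measure_closedBall_lt_top (μ : Measure (ι → ℚ_[p])) [μ.IsAddHaarMeasure]
    {r : ℝ≥0∞} (hr : r * (p : ℝ≥0∞) ^ Fintype.card ι < 1) :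
    ∑' j : ℕ, r ^ j * μ (closedBall 0 ((p : ℝ) ^ j)) < ∞ := by
  have hball : μ (closedBall 0 1) ≠ ∞ := (isCompact_closedBall 0 1).measure_ne_top
  calc ∑' j : ℕ, r ^ j * μ (closedBall 0 ((p : ℝ) ^ j))
      ≤ ∑' j : ℕ, (r * (p : ℝ≥0∞) ^ Fintype.card ι) ^ j * μ (closedBall 0 1) := by
        refine ENNReal.tsum_le_tsum fun j => ?_
        rw [mul_pow, ← pow_mul, mul_comm (Fintype.card ι), mul_assoc]
        gcongr
        exact measure_closedBall_pow_le μ j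
    _ < ∞ := by
        rw [ENNReal.tsum_mul_right]
        exact ENNReal.mul_lt_top (tsum_geometric_lt_top.mpr hr) hball.lt_top

theorem pi_norm_le_pow_iff_norm_lt_pow_add_one (x : ι → ℚ_[p]) (k : ℤ) :
    ‖x‖ ≤ (p : ℝ) ^ k ↔ ‖x‖ < (p : ℝ) ^ (k + 1) := by
  have hp : (0 : ℝ) < p := by exact_mod_cast (Fact.out : p.Prime).pos
  rw [pi_norm_le_iff_of_nonneg (by positivity), pi_norm_lt_iff (by positivity)]
  simp only [Padic.norm_le_pow_iff_norm_lt_pow_add_one]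

theorem exists_max_one_norm_eq_pow (x : ι → ℚ_[p]) : ∃ m : ℕ, max 1 ‖x‖ = (p : ℝ) ^ m := by
  have hp : (1 : ℝ) < p := by exact_mod_cast (Fact.out : p.Prime).one_lt
  obtain ⟨m, hle, hlt⟩ := exists_nat_pow_near (le_max_left 1 ‖x‖) hp
  refine ⟨m, le_antisymm (max_le (one_le_pow₀ hp.le) ?_) hle⟩
  exact_mod_cast (pi_norm_le_pow_iff_norm_lt_pow_add_one x m).mpr
    (by exact_mod_cast (le_max_right 1 ‖x‖).trans_lt hlt)

theorem hasSum_max_one_norm_cpow (x : ι → ℚ_[p]) {s : ℂ} (hs : 0 < s.re) :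
    HasSum (fun j : ℕ => (closedBall 0 ((p : ℝ) ^ j)).indicator
        (fun _ => (1 - (p : ℂ) ^ (-s)) * ((p : ℂ) ^ (-s)) ^ j) x)
      (((max 1 ‖x‖ : ℝ) : ℂ) ^ (-s)) := by
  have hp : (1 : ℝ) < p := by exact_mod_cast (Fact.out : p.Prime).one_lt
  obtain ⟨m, hm⟩ := exists_max_one_norm_eq_pow x
  have hmem : ∀ j : ℕ, x ∈ closedBall 0 ((p : ℝ) ^ j) ↔ m ≤ j := fun j => by
    rw [mem_closedBall_zero_iff, ← pow_le_pow_iff_right₀ hp, ← hm,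
      max_le_iff, and_iff_right (one_le_pow₀ hp.le)]
  have hq : ‖(p : ℂ) ^ (-s)‖ < 1 := by
    rw [Complex.norm_natCast_cpow_of_pos (Fact.out : p.Prime).pos, Complex.neg_re]
    exact Real.rpow_lt_one_of_one_lt_of_neg hp (neg_neg_of_pos hs)
  classical
  rw [hm, Complex.ofReal_pow, Complex.ofReal_natCast, ← Complex.natCast_cpow_natCast_mul,
    Complex.cpow_nat_mul]
  simpa only [Set.indicator_apply, hmem] using hasSum_ite_le_mul_geometric hq m

theorem integral_max_one_norm_cpow_mul (μ : Measure (ι → ℚ_[p])) [μ.IsAddHaarMeasure]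
    {χ : (ι → ℚ_[p]) → ℂ} (hχ : Continuous χ) (hχ_le : ∀ x, ‖χ x‖ ≤ 1) {s : ℂ}
    (hs : (Fintype.card ι : ℝ) < s.re) :
    ∫ x, ((max 1 ‖x‖ : ℝ) : ℂ) ^ (-s) * χ x ∂μ =
      (1 - (p : ℂ) ^ (-s)) *
        ∑' j : ℕ, ((p : ℂ) ^ (-s)) ^ j * ∫ x in closedBall 0 ((p : ℝ) ^ j), χ x ∂μ := by
  set q : ℂ := (p : ℂ) ^ (-s)
  set f : ℕ → (ι → ℚ_[p]) → ℂ := fun j =>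
    (closedBall 0 ((p : ℝ) ^ j)).indicator fun x => (1 - q) * q ^ j * χ x
  have hp : (1 : ℝ) < p := by exact_mod_cast (Fact.out : p.Prime).one_lt
  have hs0 : 0 < s.re := (Nat.cast_nonneg _).trans_lt hs
  have hF : ∀ x, ((max 1 ‖x‖ : ℝ) : ℂ) ^ (-s) * χ x = ∑' j, f j x := fun x => by
    rw [← ((hasSum_max_one_norm_cpow x hs0).mul_right (χ x)).tsum_eq]
    congr 1 with j
    exact (Set.indicator_mul_left _ _ _).symm
  have hq : ‖q‖ₑ * (p : ℝ≥0∞) ^ Fintype.card ι < 1 := by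
    have hp0 : (0 : ℝ) < p := zero_lt_one.trans hp
    rw [← ofReal_norm, Complex.norm_natCast_cpow_of_pos (Fact.out : p.Prime).pos, Complex.neg_re,
      ← ENNReal.ofReal_natCast, ← ENNReal.ofReal_pow hp0.le,
      ← ENNReal.ofReal_mul (by positivity), ENNReal.ofReal_lt_one, ← Real.rpow_natCast,
      ← Real.rpow_add hp0]
    exact Real.rpow_lt_one_of_one_lt_of_neg hp (by linarith)
  have hf_meas : ∀ j, AEStronglyMeasurable (f j) μ := fun j =>
    (continuous_const.mul hχ).aestronglyMeasurable.indicator measurableSet_closedBall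
  have hf_lint : ∀ j,
      ∫⁻ x, ‖f j x‖ₑ ∂μ ≤ ‖1 - q‖ₑ * (‖q‖ₑ ^ j * μ (closedBall 0 ((p : ℝ) ^ j))) := by
    intro j
    simp only [f, enorm_indicator_eq_indicator_enorm]
    rw [lintegral_indicator measurableSet_closedBall, ← mul_assoc, ← enorm_pow, ← enorm_mul,
      ← setLIntegral_const]
    refine lintegral_mono fun x => ?_
    rw [enorm_mul _ (χ x)]
    exact mul_le_of_le_one_right' (ofReal_norm (χ x) ▸ ENNReal.ofReal_le_one.mpr (hχ_le x))
  have hf_sum : ∑' j, ∫⁻ x, ‖f j x‖ₑ ∂μ ≠ ∞ := by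
    refine ne_top_of_le_ne_top ?_ (ENNReal.tsum_le_tsum hf_lint)
    rw [ENNReal.tsum_mul_left]
    exact ENNReal.mul_ne_top enorm_ne_top (tsum_pow_mul_measure_closedBall_lt_top μ hq).ne
  simp_rw [hF]
  rw [integral_tsum hf_meas hf_sum, ← tsum_mul_left]
  congr 1 with j
  rw [integral_indicator measurableSet_closedBall, integral_const_mul, mul_assoc]

theorem norm_sum_intCast_mul_le (a : ι → ℤ) (x : ι → ℚ_[p]) :
    ‖∑ i, (a i : ℚ_[p]) * x i‖ ≤ ‖x‖ :=
  IsUltrametricDist.norm_sum_le_of_forall_le_of_nonneg (norm_nonneg x) fun i _ => by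
    rw [norm_mul]
    exact (mul_le_of_le_one_left (norm_nonneg _) (Padic.norm_int_le_one _)).trans
      (norm_le_pi_norm x i)

theorem exists_sum_intCast_mul_eq {a : ι → ℤ} (ha : ¬ ∀ i, (p : ℤ) ∣ a i) (y : ℚ_[p]) :
    ∃ t : ι → ℚ_[p], ‖t‖ ≤ ‖y‖ ∧ ∑ i, (a i : ℚ_[p]) * t i = y := by
  classical
  obtain ⟨i₀, hi₀⟩ := not_forall.mp ha
  have ha₀ : ‖(a i₀ : ℚ_[p])‖ = 1 :=
    (Padic.norm_int_le_one _).antisymm (not_lt.mp (mt Padic.norm_intCast_lt_one_iff.mp hi₀))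
  have ha₀' : (a i₀ : ℚ_[p]) ≠ 0 := norm_ne_zero_iff.mp (by rw [ha₀]; exact one_ne_zero)
  refine ⟨Pi.single i₀ (y / a i₀), ?_, ?_⟩
  · rw [Pi.norm_single, norm_div, ha₀, div_one]
  · simp [Pi.single_apply, mul_div_cancel₀ _ ha₀']

end Padic

theorem stmt1_general (p : ℕ) [Fact p.Prime] (n : ℕ)
    (μ : Measure (Fin n → ℚ_[p])) (hμ : μ.IsAddHaarMeasure)
    (hμ1 : μ {x | ∀ i, ‖x i‖ ≤ 1} = 1)
    (ψ : ℚ_[p] → ℂ) (hψcont : Continuous ψ)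
    (hψadd : ∀ x y : ℚ_[p], ψ (x + y) = ψ x * ψ y)
    (hψabs : ∀ x : ℚ_[p], ‖ψ x‖ = 1)
    (hψtriv : ∀ x : ℚ_[p], ‖x‖ ≤ 1 → ψ x = 1)
    (hψnontriv : ∃ x : ℚ_[p], ‖x‖ ≤ p ∧ ψ x ≠ 1)
    (a : Fin n → ℤ) (ha : ¬ ∀ i, (p : ℤ) ∣ a i)
    (s : ℂ) (hs : (n : ℝ) < s.re) :
    ∫ x : Fin n → ℚ_[p], ((max 1 ‖x‖ : ℝ) : ℂ) ^ (-s) * ψ (∑ i, (a i : ℚ_[p]) * x i) ∂μ =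
      1 - (p : ℂ) ^ (-s) := by
  set χ : (Fin n → ℚ_[p]) → ℂ := fun x => ψ (∑ i, (a i : ℚ_[p]) * x i)
  have hχ_add (x y : Fin n → ℚ_[p]) : χ (x + y) = χ x * χ y := by
    simp only [χ, Pi.add_apply, mul_add, Finset.sum_add_distrib, hψadd]
  have hχ_cont : Continuous χ := hψcont.comp (by fun_prop)
  have hball : closedBall (0 : Fin n → ℚ_[p]) 1 = {x | ∀ i, ‖x i‖ ≤ 1} := by
    ext x
    simp [pi_norm_le_iff_of_nonneg]
  have hI₀ : ∫ x in closedBall 0 ((p : ℝ) ^ 0), χ x ∂μ = 1 := by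
    rw [setIntegral_congr_fun measurableSet_closedBall fun x hx => hψtriv _
      ((Padic.norm_sum_intCast_mul_le a x).trans (by simpa using hx))]
    simp [Measure.real, hball, hμ1]
  have hI_succ (j : ℕ) : ∫ x in closedBall 0 ((p : ℝ) ^ (j + 1)), χ x ∂μ = 0 := by
    obtain ⟨y, hy, hψy⟩ := hψnontriv
    obtain ⟨t, ht, hty⟩ := Padic.exists_sum_intCast_mul_eq ha y
    have htmem : -t ∈ closedBall 0 ((p : ℝ) ^ (j + 1)) := by
      rw [mem_closedBall_zero_iff, norm_neg]
      exact ht.trans <| hy.trans <|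
        le_self_pow₀ (by exact_mod_cast (Fact.out : p.Prime).one_le) j.succ_ne_zero
    refine setIntegral_eq_zero_of_add_left_eq_mul μ ?_ (fun x => by rw [hχ_add]) (hty ▸ hψy)
    rw [preimage_add_closedBall, zero_sub, ← IsUltrametricDist.closedBall_eq_of_mem htmem]
  change ∫ x, _ * χ x ∂μ = _
  rw [Padic.integral_max_one_norm_cpow_mul μ hχ_cont (fun x => (hψabs _).le) (by simpa using hs),
    tsum_eq_single 0 fun j hj => ?_, pow_zero, one_mul, hI₀, mul_one]
  obtain ⟨j, rfl⟩ := Nat.exists_eq_succ_of_ne_zero hj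
  rw [hI_succ, mul_zero]

/-- Let `p` be a prime, `n ≥ 1`, `ψ` a standard additive character of
`ℚ_p` (continuous, with values on the unit circle, trivial on `ℤ_p`, nontrivial on
`p⁻¹ℤ_p`), and `a ∈ ℤ^n` not all of whose coordinates are divisible by `p`. Then for
`Re s > n`, `∫ max(1,‖x‖_p)^(-s) ψ(a·x) dμ(x) = 1 - p^(-s)`. -/
theorem stmt1 (p : ℕ) [Fact p.Prime] (n : ℕ) (hn : 1 ≤ n)
    (μ : Measure (Fin n → ℚ_[p])) (hμ : μ.IsAddHaarMeasure)
    (hμ1 : μ {x | ∀ i, ‖x i‖ ≤ 1} = 1)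
    (ψ : ℚ_[p] → ℂ) (hψcont : Continuous ψ)
    (hψadd : ∀ x y : ℚ_[p], ψ (x + y) = ψ x * ψ y)
    (hψabs : ∀ x : ℚ_[p], ‖ψ x‖ = 1)
    (hψtriv : ∀ x : ℚ_[p], ‖x‖ ≤ 1 → ψ x = 1)
    (hψnontriv : ∃ x : ℚ_[p], ‖x‖ ≤ p ∧ ψ x ≠ 1)
    (a : Fin n → ℤ) (ha : ¬ ∀ i, (p : ℤ) ∣ a i)
    (s : ℂ) (hs : (n : ℝ) < s.re) :
    ∫ x : Fin n → ℚ_[p], ((max 1 ‖x‖ : ℝ) : ℂ) ^ (-s) * ψ (∑ i, (a i : ℚ_[p]) * x i) ∂μ =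
      1 - (p : ℂ) ^ (-s) :=
  stmt1_general p n μ hμ hμ1 ψ hψcont hψadd hψabs hψtriv hψnontriv a ha s hs
end

section
/- Let n ≥ 1 be an integer. For every s ∈ ℂ with Re(s) > n, the function x ↦ (1+‖x‖²)^{−Re(s)/2} is Lebesgue-integrable on ℝ^n and ∫_{ℝ^n} (1 + x_1² + ⋯ + x_n²)^{−s/2} dx = π^{n/2} · Γ((s−n)/2)/Γ(s/2). -/
/-!
In polar coordinates the integral becomes `n vol(B) ∫₀^∞ r^(n-1) (1 + r²)^(-s/2) dr`, with `B` the
unit ball. The substitution `t = r²` turns the radial integral into half of the Beta integral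
`∫₀^∞ t^(u-1) (1 + t)^(-(u+v)) dt = Γ(u) Γ(v) / Γ(u + v)` with `u = n/2`, `v = (s-n)/2`, which is
Euler's integral over `(0, 1)` after `x = t / (1 + t)`. Since `vol(B) = π^(n/2) / Γ(n/2 + 1)`,
the factor `Γ(n/2)` cancels.
-/

open MeasureTheory Set Complex Module

lemma image_div_one_add_Ioi : (fun t : ℝ => t / (1 + t)) '' Ioi 0 = Ioo 0 1 := by
  ext x
  constructor
  · rintro ⟨t, ht : 0 < t, rfl⟩
    exact ⟨by positivity, (div_lt_one (by positivity)).2 (by linarith)⟩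
  · rintro ⟨hx0, hx1⟩
    have h1x : 1 - x ≠ 0 := by linarith
    refine ⟨x / (1 - x), div_pos hx0 (by linarith), ?_⟩
    field_simp
    ring

lemma integral_Ioi_cpow_mul_one_add_cpow {u v : ℂ} (hu : 0 < u.re) (hv : 0 < v.re) :
    ∫ t in Ioi (0 : ℝ), (t : ℂ) ^ (u - 1) * ((1 + t : ℝ) : ℂ) ^ (-(u + v)) =
      Gamma u * Gamma v / Gamma (u + v) := by
  have hderiv : ∀ t ∈ Ioi (0 : ℝ),
      HasDerivWithinAt (fun t : ℝ => t / (1 + t)) ((1 + t) ^ 2)⁻¹ (Ioi 0) t := by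
    intro t (ht : 0 < t)
    have h1t : 1 + t ≠ 0 := by positivity
    refine ((hasDerivAt_id' t).div ((hasDerivAt_id' t).const_add 1) h1t).hasDerivWithinAt
      |>.congr_deriv ?_
    field_simp
    ring
  have hinj : InjOn (fun t : ℝ => t / (1 + t)) (Ioi 0) := by
    intro a (ha : 0 < a) b (hb : 0 < b) h
    field_simp at h
    linarith
  have hintegrand : ∀ t ∈ Ioi (0 : ℝ), |((1 + t) ^ 2)⁻¹| •
      (((t / (1 + t) : ℝ) : ℂ) ^ (u - 1) * (1 - ((t / (1 + t) : ℝ) : ℂ)) ^ (v - 1)) =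
      (t : ℂ) ^ (u - 1) * ((1 + t : ℝ) : ℂ) ^ (-(u + v)) := by
    intro t (ht : 0 < t)
    have h1t : (0 : ℝ) < 1 + t := by positivity
    have hC : ((1 + t : ℝ) : ℂ) ≠ 0 := by exact_mod_cast h1t.ne'
    have hsub : 1 - ((t / (1 + t) : ℝ) : ℂ) = (((1 + t : ℝ) : ℂ))⁻¹ := by
      push_cast at hC ⊢
      field_simp
      ring
    rw [hsub, inv_cpow_ofReal_nonneg h1t.le, ofReal_div,
      div_cpow_ofReal_nonneg ht.le h1t.le, abs_of_pos (by positivity), real_smul]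
    have hexp : -(u + v) = -2 + (-(u - 1) + -(v - 1)) := by ring
    rw [hexp, cpow_add _ _ hC, cpow_add _ _ hC, cpow_neg, cpow_neg, cpow_neg, cpow_two]
    push_cast
    ring
  have key := integral_image_eq_integral_abs_deriv_smul measurableSet_Ioi hderiv hinj
    (fun x : ℝ => (x : ℂ) ^ (u - 1) * (1 - (x : ℂ)) ^ (v - 1))
  rw [image_div_one_add_Ioi, setIntegral_congr_fun measurableSet_Ioi hintegrand,
    ← integral_Ioc_eq_integral_Ioo, ← intervalIntegral.integral_of_le zero_le_one] at key
  rw [← key, ← betaIntegral, betaIntegral_eq_Gamma_mul_div u v hu hv]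

lemma integral_Ioi_pow_smul_one_add_sq_cpow {d : ℕ} (hd : 0 < d) {s : ℂ} (hs : (d : ℝ) < s.re) :
    ∫ r in Ioi (0 : ℝ), r ^ (d - 1) • ((1 + r ^ 2 : ℝ) : ℂ) ^ (-s / 2) =
      Gamma (d / 2) * Gamma ((s - d) / 2) / (2 * Gamma (s / 2)) := by
  have hu : 0 < ((d : ℂ) / 2).re := by simp only [div_ofNat_re, natCast_re]; positivity
  have hv : 0 < ((s - d) / 2).re := by simp only [div_ofNat_re, sub_re, natCast_re]; linarith
  have hbeta := integral_Ioi_cpow_mul_one_add_cpow hu hv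
  rw [show (d : ℂ) / 2 + (s - d) / 2 = s / 2 by ring, ← integral_comp_rpow_Ioi _ two_ne_zero]
    at hbeta
  have hintegrand : ∀ r ∈ Ioi (0 : ℝ), (|(2 : ℝ)| * r ^ ((2 : ℝ) - 1)) •
      (((r ^ (2 : ℝ) : ℝ) : ℂ) ^ ((d : ℂ) / 2 - 1) * ((1 + r ^ (2 : ℝ) : ℝ) : ℂ) ^ (-(s / 2))) =
      2 * (r ^ (d - 1) • ((1 + r ^ 2 : ℝ) : ℂ) ^ (-s / 2)) := by
    intro r (hr : 0 < r)
    have hrC : (r : ℂ) ≠ 0 := by exact_mod_cast hr.ne'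
    have hpow : (r : ℂ) * ((r : ℂ) ^ 2) ^ ((d : ℂ) / 2 - 1) = (r : ℂ) ^ (d - 1) := by
      rw [← cpow_nat_mul' (by simp [arg_ofReal_of_nonneg hr.le, Real.pi_pos])
          (by simp [arg_ofReal_of_nonneg hr.le, Real.pi_pos.le]), ← cpow_natCast,
        show ((d - 1 : ℕ) : ℂ) = 1 + 2 * ((d : ℂ) / 2 - 1) by push_cast [Nat.cast_sub hd]; ring,
        cpow_add _ _ hrC, cpow_one]
      norm_num
    rw [Real.rpow_two, show (2 : ℝ) - 1 = 1 by norm_num, Real.rpow_one, abs_two,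
      real_smul, real_smul, neg_div]
    push_cast
    rw [← hpow]
    ring
  rw [setIntegral_congr_fun measurableSet_Ioi hintegrand, integral_const_mul] at hbeta
  rw [mul_comm 2, ← div_div, ← hbeta]
  field_simp

lemma ofReal_sqrt_pi_pow (d : ℕ) : ((√Real.pi ^ d : ℝ) : ℂ) = (Real.pi : ℂ) ^ ((d : ℂ) / 2) := by
  rw [Real.sqrt_eq_rpow, ← Real.rpow_mul_natCast Real.pi_pos.le, ofReal_cpow Real.pi_pos.le]
  push_cast
  ring_nf

theorem integral_one_add_norm_sq_cpow {E : Type*} [NormedAddCommGroup E] [InnerProductSpace ℝ E]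
    [FiniteDimensional ℝ E] [MeasurableSpace E] [BorelSpace E] [Nontrivial E] {s : ℂ}
    (hs : (finrank ℝ E : ℝ) < s.re) :
    ∫ x : E, ((1 + ‖x‖ ^ 2 : ℝ) : ℂ) ^ (-s / 2) =
      (Real.pi : ℂ) ^ ((finrank ℝ E : ℂ) / 2) * Gamma ((s - finrank ℝ E) / 2) / Gamma (s / 2) := by
  have hd : 0 < finrank ℝ E := finrank_pos
  have hd0 : (finrank ℝ E : ℂ) ≠ 0 := by exact_mod_cast hd.ne'
  have hΓd : Gamma ((finrank ℝ E : ℂ) / 2) ≠ 0 :=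
    Gamma_ne_zero_of_re_pos (by simp only [div_ofNat_re, natCast_re]; positivity)
  have hΓs : Gamma (s / 2) ≠ 0 :=
    Gamma_ne_zero_of_re_pos (by simp only [div_ofNat_re]; linarith)
  have hΓd1 : ((Real.Gamma (finrank ℝ E / 2 + 1) : ℝ) : ℂ) =
      (finrank ℝ E : ℂ) / 2 * Gamma ((finrank ℝ E : ℂ) / 2) := by
    rw [← Gamma_ofReal, ← Gamma_add_one _ (div_ne_zero hd0 two_ne_zero)]
    push_cast
    rfl
  rw [integral_fun_norm_addHaar volume (fun r : ℝ => ((1 + r ^ 2 : ℝ) : ℂ) ^ (-s / 2)),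
    integral_Ioi_pow_smul_one_add_sq_cpow hd hs, measureReal_def,
    InnerProductSpace.volume_ball, ENNReal.ofReal_one, one_pow, one_mul,
    ENNReal.toReal_ofReal (div_nonneg (by positivity) (Real.Gamma_pos_of_pos (by positivity)).le),
    nsmul_eq_mul, real_smul, ofReal_div, ofReal_sqrt_pi_pow, hΓd1]
  field_simp

lemma integral_comp_sum_sq {ι F : Type*} [Fintype ι] [NormedAddCommGroup F] [NormedSpace ℝ F]
    (f : ℝ → F) :
    ∫ x : ι → ℝ, f (∑ i, x i ^ 2) = ∫ x : EuclideanSpace ℝ ι, f (‖x‖ ^ 2) := by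
  simp_rw [← (PiLp.volume_preserving_toLp ι).integral_comp
    (MeasurableEquiv.toLp 2 _).measurableEmbedding, EuclideanSpace.real_norm_sq_eq]

lemma integrable_comp_sum_sq_iff {ι F : Type*} [Fintype ι] [NormedAddCommGroup F] (f : ℝ → F) :
    Integrable (fun x : ι → ℝ => f (∑ i, x i ^ 2)) ↔
      Integrable (fun x : EuclideanSpace ℝ ι => f (‖x‖ ^ 2)) := by
  simp_rw [← (PiLp.volume_preserving_toLp ι).integrable_comp_emb
    (MeasurableEquiv.toLp 2 _).measurableEmbedding, Function.comp_def,
    EuclideanSpace.real_norm_sq_eq]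

/-- For `n ≥ 1` and `Re s > n`, the function
`x ↦ (1+‖x‖²)^(-Re s/2)` is Lebesgue integrable on `ℝ^n`, and
`∫_{ℝ^n} (1+x₁²+⋯+xₙ²)^(-s/2) dx = π^(n/2) Γ((s-n)/2)/Γ(s/2)`. -/
theorem stmt3 (n : ℕ) (hn : 1 ≤ n) (s : ℂ) (hs : (n : ℝ) < s.re) :
    Integrable (fun x : Fin n → ℝ => (1 + ∑ i, (x i) ^ 2) ^ (-(s.re) / 2)) volume ∧
    ∫ x : Fin n → ℝ, ((1 + ∑ i, (x i) ^ 2 : ℝ) : ℂ) ^ (-s / 2) =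
      (Real.pi : ℂ) ^ ((n : ℂ) / 2) * Complex.Gamma ((s - n) / 2) / Complex.Gamma (s / 2) := by
  have : Nonempty (Fin n) := Fin.pos_iff_nonempty.mp hn
  constructor
  · rw [integrable_comp_sum_sq_iff (fun r => (1 + r) ^ (-s.re / 2))]
    exact integrable_rpow_neg_one_add_norm_sq (by simpa using hs)
  · rw [integral_comp_sum_sq (fun r => ((1 + r : ℝ) : ℂ) ^ (-s / 2)),
      integral_one_add_norm_sq_cpow (by simpa using hs), finrank_euclideanSpace_fin]
end

section
/- Let n ≥ 1 be an integer. For every δ > 0 and every compact subset K of the half-plane {s ∈ ℂ : Re(s) > n} there exists a constant c(δ,K) > 0 such that for all a ∈ ℤ^n and all s ∈ K, |∫_{ℝ^n} (1 + x_1² + ⋯ + x_n²)^{−s/2} e^{−2πi(a_1x_1+⋯+a_nx_n)} dx| ≤ c(δ,K) · (1 + |Im(s)|)^δ · (1 + ‖a‖)^{−δ}, where ‖a‖ = (a_1²+⋯+a_n²)^{1/2}. -/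
/-!
Writing `φ_s(x) = (1 + ‖x‖²)^(-s/2)`, the integral is the Fourier transform `𝓕φ_s(a)`.
Differentiation raises the exponent, `Dφ_s(x) = -s φ_{s+2}(x) ⟪x, ·⟫`, so by Leibniz' rule
`‖D^k φ_s(x)‖ ≤ C (1 + ‖x‖²)^(-(Re s + k)/2)` uniformly for `s` in a bounded set. As `Re s > n`,
these derivatives are integrable, and integrating by parts `m = ⌈δ⌉` times bounds
`‖w‖^m ‖𝓕φ_s(w)‖` uniformly on `K`. Together with the trivial bound (`m = 0`) this gives
`‖𝓕φ_s(w)‖ ≤ c (1 + ‖w‖)^(-δ)`, which is the claim since `(1 + |Im s|)^δ ≥ 1`.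
-/

open MeasureTheory Complex Finset
open scoped FourierTransform RealInnerProductSpace

theorem ContinuousLinearMap.norm_iteratedFDeriv_le_rpow {E F : Type*} [NormedAddCommGroup E]
    [NormedSpace ℝ E] [NormedAddCommGroup F] [NormedSpace ℝ F] (L : E →L[ℝ] F) (k : ℕ) (x : E) :
    ‖iteratedFDeriv ℝ k L x‖ ≤ ‖L‖ * (1 + ‖x‖ ^ 2) ^ ((1 - k : ℝ) / 2) := by
  have hderiv : fderiv ℝ L = fun _ => L := funext fun _ => L.fderiv
  match k with
  | 0 =>
    rw [norm_iteratedFDeriv_zero, Nat.cast_zero, sub_zero, ← Real.sqrt_eq_rpow]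
    exact (L.le_opNorm x).trans <| mul_le_mul_of_nonneg_left
      (Real.le_sqrt_of_sq_le (by linarith)) (norm_nonneg L)
  | 1 =>
    rw [← norm_iteratedFDeriv_fderiv, norm_iteratedFDeriv_zero, hderiv]
    simp
  | k + 2 =>
    rw [← norm_iteratedFDeriv_fderiv, hderiv, iteratedFDeriv_const_of_ne (by omega)]
    simp only [Pi.zero_apply, norm_zero]
    positivity

section Bracket

variable {E : Type*} [NormedAddCommGroup E]

/-- `(1 + ‖x‖²)^(-s/2)`, written through `exp ∘ log` so that its smoothness is immediate. -/
noncomputable def bracketPow (s : ℂ) (x : E) : ℂ :=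
  exp (-s / 2 * Real.log (1 + ‖x‖ ^ 2))

theorem norm_bracketPow (s : ℂ) (x : E) :
    ‖bracketPow s x‖ = (1 + ‖x‖ ^ 2) ^ (-s.re / 2) := by
  rw [bracketPow, norm_exp, Real.rpow_def_of_pos (by positivity)]
  simp [mul_comm]

variable [InnerProductSpace ℝ E]

theorem contDiff_bracketPow (s : ℂ) {N : WithTop ℕ∞} :
    ContDiff ℝ N (bracketPow (E := E) s) := by
  refine contDiff_exp.comp (contDiff_const.mul (ofRealCLM.contDiff.comp ?_))
  exact (contDiff_const.add (contDiff_norm_sq ℝ)).log fun x => by positivity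

noncomputable def ofRealInnerSL : E →L[ℝ] E →L[ℝ] ℂ :=
  ContinuousLinearMap.compL ℝ E ℝ ℂ ofRealCLM ∘L innerSL ℝ

@[simp]
theorem ofRealInnerSL_apply_apply (x y : E) : ofRealInnerSL x y = (⟪x, y⟫ : ℂ) := rfl

theorem norm_smul_ofRealInnerSL_le (c : ℂ) :
    ‖c • (ofRealInnerSL : E →L[ℝ] E →L[ℝ] ℂ)‖ ≤ ‖c‖ := by
  refine ContinuousLinearMap.opNorm_le_bound _ (norm_nonneg c) fun x => ?_
  refine ContinuousLinearMap.opNorm_le_bound _ (by positivity) fun y => ?_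
  rw [smul_apply, smul_apply, ofRealInnerSL_apply_apply, smul_eq_mul, norm_mul, norm_real,
    mul_assoc]
  exact mul_le_mul_of_nonneg_left (norm_inner_le_norm x y) (norm_nonneg c)

theorem fderiv_bracketPow (s : ℂ) :
    fderiv ℝ (bracketPow (E := E) s) =
      fun x => bracketPow (s + 2) x • ((-s) • ofRealInnerSL) x := by
  funext x
  have hpos : (0 : ℝ) < 1 + ‖x‖ ^ 2 := by positivity
  have hlog : HasFDerivAt (fun y : E => Real.log (1 + ‖y‖ ^ 2))
      ((1 + ‖x‖ ^ 2)⁻¹ • (2 • innerSL ℝ x)) x :=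
    ((hasStrictFDerivAt_norm_sq x).hasFDerivAt.const_add 1).log hpos.ne'
  have h : HasFDerivAt (bracketPow s) _ x :=
    ((ofRealCLM.hasFDerivAt.comp x hlog).const_mul (-s / 2)).cexp
  rw [h.fderiv]
  ext v
  have hexp : bracketPow (s + 2) x = bracketPow s x * ((1 + ‖x‖ ^ 2 : ℝ) : ℂ)⁻¹ := by
    rw [bracketPow, bracketPow, ← ofReal_inv, ← Real.exp_log (inv_pos.mpr hpos), ofReal_exp,
      ← exp_add, Real.log_inv]
    push_cast
    ring_nf
  rw [hexp, bracketPow]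
  simp only [smul_apply, ContinuousLinearMap.coe_comp, Function.comp_apply,
    ofRealInnerSL_apply_apply, innerSL_apply_apply, smul_eq_mul, ofRealCLM_apply]
  push_cast
  ring

theorem norm_iteratedFDeriv_succ_bracketPow_le {m : ℕ} {s : ℂ} {C R : ℝ} (hs : ‖s‖ ≤ R)
    (h : ∀ j ≤ m, ∀ x : E, ‖iteratedFDeriv ℝ j (bracketPow (s + 2)) x‖ ≤
      C * (1 + ‖x‖ ^ 2) ^ (-((s + 2).re + j) / 2))
    (x : E) :
    ‖iteratedFDeriv ℝ (m + 1) (bracketPow s) x‖ ≤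
      2 ^ m * C * R * (1 + ‖x‖ ^ 2) ^ (-(s.re + (m + 1 : ℕ)) / 2) := by
  set M : E →L[ℝ] E →L[ℝ] ℂ := (-s) • ofRealInnerSL
  have hM : ‖M‖ ≤ R := (norm_smul_ofRealInnerSL_le (-s)).trans (by rwa [norm_neg])
  have hterm : ∀ j ∈ range (m + 1),
      (m.choose j : ℝ) * ‖iteratedFDeriv ℝ j (bracketPow (s + 2)) x‖ *
        ‖iteratedFDeriv ℝ (m - j) M x‖ ≤
      m.choose j * (C * R * (1 + ‖x‖ ^ 2) ^ (-(s.re + (m + 1 : ℕ)) / 2)) := by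
    intro j hj
    have hjm : j ≤ m := Nat.lt_succ_iff.mp (mem_range.mp hj)
    have hφ := h j hjm x
    have hL := (M.norm_iteratedFDeriv_le_rpow (m - j) x).trans
      (mul_le_mul_of_nonneg_right hM (by positivity))
    rw [mul_assoc]
    refine mul_le_mul_of_nonneg_left ?_ (Nat.cast_nonneg _)
    calc _ ≤ C * (1 + ‖x‖ ^ 2) ^ (-((s + 2).re + j) / 2) *
          (R * (1 + ‖x‖ ^ 2) ^ ((1 - (m - j : ℕ) : ℝ) / 2)) :=
          mul_le_mul hφ hL (norm_nonneg _) ((norm_nonneg _).trans hφ)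
      _ = C * R * (1 + ‖x‖ ^ 2) ^ (-(s.re + (m + 1 : ℕ)) / 2) := by
          rw [mul_mul_mul_comm, ← Real.rpow_add (by positivity)]
          push_cast [Nat.cast_sub hjm, add_re, re_ofNat]
          ring_nf
  calc ‖iteratedFDeriv ℝ (m + 1) (bracketPow s) x‖
      = ‖iteratedFDeriv ℝ m (fun y => bracketPow (s + 2) y • M y) x‖ := by
        rw [← norm_iteratedFDeriv_fderiv, fderiv_bracketPow]
    _ ≤ ∑ j ∈ range (m + 1), (m.choose j : ℝ) *
          ‖iteratedFDeriv ℝ j (bracketPow (s + 2)) x‖ * ‖iteratedFDeriv ℝ (m - j) M x‖ :=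
        norm_iteratedFDeriv_smul_le (contDiff_bracketPow _) M.contDiff x le_rfl
    _ ≤ ∑ j ∈ range (m + 1),
          m.choose j * (C * R * (1 + ‖x‖ ^ 2) ^ (-(s.re + (m + 1 : ℕ)) / 2)) :=
        sum_le_sum hterm
    _ = 2 ^ m * C * R * (1 + ‖x‖ ^ 2) ^ (-(s.re + (m + 1 : ℕ)) / 2) := by
        rw [← sum_mul, ← Nat.cast_sum, Nat.sum_range_choose]
        push_cast
        ring

theorem norm_iteratedFDeriv_bracketPow_le (m : ℕ) (R : ℝ) :
    ∃ C ≥ 0, ∀ i ≤ m, ∀ s : ℂ, ‖s‖ ≤ R → ∀ x : E,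
      ‖iteratedFDeriv ℝ i (bracketPow s) x‖ ≤ C * (1 + ‖x‖ ^ 2) ^ (-(s.re + i) / 2) := by
  induction m generalizing R with
  | zero =>
    refine ⟨1, zero_le_one, fun i hi s _ x => ?_⟩
    rw [Nat.le_zero.mp hi, norm_iteratedFDeriv_zero, norm_bracketPow]
    simp [neg_div]
  | succ m ih =>
    obtain ⟨C, hC0, hC⟩ := ih (R + 2)
    refine ⟨max C (2 ^ m * C * R), le_max_of_le_left hC0, fun i hi s hs x => ?_⟩
    have hs2 : ‖s + 2‖ ≤ R + 2 := (norm_add_le _ _).trans (by simpa using hs)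
    rcases Nat.le_succ_iff.mp hi with hi | rfl
    · exact (hC i hi s (by linarith) x).trans
        (mul_le_mul_of_nonneg_right (le_max_left _ _) (by positivity))
    · refine (norm_iteratedFDeriv_succ_bracketPow_le hs (fun j hj => hC j hj (s + 2) hs2) x).trans
        (mul_le_mul_of_nonneg_right (le_max_right _ _) (by positivity))

end Bracket

section Fourier

variable {V F : Type*} [NormedAddCommGroup V] [InnerProductSpace ℝ V] [FiniteDimensional ℝ V]
  [MeasurableSpace V] [BorelSpace V] [NormedAddCommGroup F] [NormedSpace ℂ F]

theorem pow_mul_norm_fourier_le_of_norm_iteratedFDeriv_le {f : V → F} {m : ℕ}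
    (hf : ContDiff ℝ m f) {C σ : ℝ} (hσ : (Module.finrank ℝ V : ℝ) < σ)
    (hbound : ∀ i ≤ m, ∀ x, ‖iteratedFDeriv ℝ i f x‖ ≤ C * (1 + ‖x‖ ^ 2) ^ (-σ / 2)) (w : V) :
    ‖w‖ ^ m * ‖𝓕 f w‖ ≤ 2 ^ m * (m + 1) * (C * ∫ x : V, (1 + ‖x‖ ^ 2) ^ (-σ / 2)) := by
  have hweight : Integrable fun x : V => (1 + ‖x‖ ^ 2) ^ (-σ / 2) :=
    integrable_rpow_neg_one_add_norm_sq hσ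
  have hint : ∀ i ≤ m, Integrable fun x => ‖iteratedFDeriv ℝ i f x‖ := fun i hi =>
    (hweight.const_mul C).mono'
      (hf.continuous_iteratedFDeriv (by exact_mod_cast hi)).norm.aestronglyMeasurable
      (.of_forall fun x => by simpa only [norm_norm] using hbound i hi x)
  have hle : ∀ i ≤ m,
      ∫ x, ‖iteratedFDeriv ℝ i f x‖ ≤ C * ∫ x : V, (1 + ‖x‖ ^ 2) ^ (-σ / 2) :=
    fun i hi => (integral_mono (hint i hi) (hweight.const_mul C) (hbound i hi)).trans_eq
      (integral_const_mul _ _)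
  have key := Real.pow_mul_norm_iteratedFDeriv_fourier_le hf (K := 0) ?_ le_rfl le_rfl w
  · simp only [pow_zero, one_mul, range_one, singleton_product, sum_map,
      Function.Embedding.coeFn_mk, Nat.cast_zero, mul_zero, zero_add,
      norm_iteratedFDeriv_zero] at key
    refine key.trans ?_
    rw [mul_assoc]
    gcongr
    calc ∑ j ∈ range (m + 1), ∫ v, ‖iteratedFDeriv ℝ j f v‖
        ≤ ∑ _j ∈ range (m + 1), C * ∫ x : V, (1 + ‖x‖ ^ 2) ^ (-σ / 2) :=
          sum_le_sum fun j hj => hle j (Nat.lt_succ_iff.mp (mem_range.mp hj))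
      _ = (m + 1) * (C * ∫ x : V, (1 + ‖x‖ ^ 2) ^ (-σ / 2)) := by simp
  · intro k n hk hn
    obtain rfl : k = 0 := by exact_mod_cast nonpos_iff_eq_zero.mp hk
    simpa using hint n (by exact_mod_cast hn)

theorem norm_fourier_bracketPow_le (δ : ℝ) {σ : ℝ} (hσ : (Module.finrank ℝ V : ℝ) < σ)
    (R : ℝ) :
    ∃ c, ∀ s : ℂ, σ ≤ s.re → ‖s‖ ≤ R → ∀ w : V,
      ‖𝓕 (bracketPow s : V → ℂ) w‖ ≤ c * (1 + ‖w‖) ^ (-δ) := by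
  set m := ⌈δ⌉₊
  obtain ⟨C, hC0, hC⟩ := norm_iteratedFDeriv_bracketPow_le (E := V) m R
  set A := C * ∫ x : V, (1 + ‖x‖ ^ 2) ^ (-σ / 2)
  refine ⟨2 ^ (m - 1) * (A + 2 ^ m * (m + 1) * A), fun s hσs hs w => ?_⟩
  have hdecay : ∀ k ≤ m, ‖w‖ ^ k * ‖𝓕 (bracketPow s : V → ℂ) w‖ ≤ 2 ^ k * (k + 1) * A := by
    refine fun k hk => pow_mul_norm_fourier_le_of_norm_iteratedFDeriv_le
      (contDiff_bracketPow s) hσ (fun i hi x => (hC i (hi.trans hk) s hs x).trans ?_) w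
    refine mul_le_mul_of_nonneg_left (Real.rpow_le_rpow_of_exponent_le ?_ ?_) hC0
    · nlinarith [norm_nonneg x]
    · linarith [(Nat.cast_nonneg i : (0 : ℝ) ≤ i)]
  have hpow : (1 + ‖w‖) ^ δ ≤ 2 ^ (m - 1) * (1 ^ m + ‖w‖ ^ m) := by
    calc (1 + ‖w‖) ^ δ ≤ (1 + ‖w‖) ^ (m : ℝ) :=
          Real.rpow_le_rpow_of_exponent_le (by linarith [norm_nonneg w]) (Nat.le_ceil δ)
      _ = (1 + ‖w‖) ^ m := Real.rpow_natCast _ m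
      _ ≤ 2 ^ (m - 1) * (1 ^ m + ‖w‖ ^ m) := add_pow_le zero_le_one (norm_nonneg w) m
  rw [Real.rpow_neg (by positivity), ← div_eq_mul_inv, le_div_iff₀ (by positivity)]
  calc ‖𝓕 (bracketPow s : V → ℂ) w‖ * (1 + ‖w‖) ^ δ
      ≤ ‖𝓕 (bracketPow s : V → ℂ) w‖ * (2 ^ (m - 1) * (1 ^ m + ‖w‖ ^ m)) :=
        mul_le_mul_of_nonneg_left hpow (norm_nonneg _)
    _ = 2 ^ (m - 1) * (‖w‖ ^ 0 * ‖𝓕 (bracketPow s : V → ℂ) w‖ +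
          ‖w‖ ^ m * ‖𝓕 (bracketPow s : V → ℂ) w‖) := by ring
    _ ≤ 2 ^ (m - 1) * (A + 2 ^ m * (m + 1) * A) := by
        refine mul_le_mul_of_nonneg_left (add_le_add ?_ (hdecay m le_rfl)) (by positivity)
        simpa using hdecay 0 m.zero_le

end Fourier

theorem integral_cpow_mul_cexp_eq_fourier_bracketPow {n : ℕ} (s : ℂ) (w : Fin n → ℝ) :
    ∫ x : Fin n → ℝ, ((1 + ∑ i, x i ^ 2 : ℝ) : ℂ) ^ (-s / 2) *
        exp (-2 * Real.pi * I * ∑ i, (w i : ℂ) * (x i : ℂ)) =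
      𝓕 (bracketPow s : EuclideanSpace ℝ (Fin n) → ℂ) (WithLp.toLp 2 w) := by
  rw [Real.fourier_eq', ← (PiLp.volume_preserving_toLp (Fin n)).integral_comp
    (MeasurableEquiv.toLp 2 _).measurableEmbedding]
  refine integral_congr_ae (.of_forall fun x => ?_)
  have hpos : 0 < 1 + ∑ i, x i ^ 2 := by positivity
  simp only [bracketPow, EuclideanSpace.norm_sq_eq, Real.norm_eq_abs, sq_abs, smul_eq_mul,
    PiLp.inner_apply, RCLike.inner_apply, conj_trivial]
  rw [cpow_def_of_ne_zero (ofReal_ne_zero.mpr hpos.ne'), ← ofReal_log hpos.le, mul_comm]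
  push_cast
  ring_nf

theorem stmt4_general (n : ℕ) :
    ∀ δ > (0 : ℝ), ∀ K : Set ℂ, IsCompact K → K ⊆ {s : ℂ | (n : ℝ) < s.re} →
      ∃ c > (0 : ℝ), ∀ (a : Fin n → ℤ), ∀ s ∈ K,
        ‖∫ x : Fin n → ℝ,
            ((1 + ∑ i, (x i) ^ 2 : ℝ) : ℂ) ^ (-s / 2) *
              Complex.exp (-2 * Real.pi * Complex.I * (∑ i, (a i : ℂ) * (x i : ℂ)))‖
          ≤ c * (1 + |s.im|) ^ δ * (1 + Real.sqrt (∑ i, (a i : ℝ) ^ 2)) ^ (-δ) := by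
  intro δ hδ K hK hKre
  obtain ⟨σ, hnσ, hσK⟩ := hK.exists_forall_le' continuous_re.continuousOn hKre
  obtain ⟨R, hR⟩ := isBounded_iff_forall_norm_le.mp hK.isBounded
  obtain ⟨c, hc⟩ := norm_fourier_bracketPow_le (V := EuclideanSpace ℝ (Fin n)) δ
    (by simpa using hnσ) R
  refine ⟨max c 1, by positivity, fun a s hs => ?_⟩
  set w : EuclideanSpace ℝ (Fin n) := WithLp.toLp 2 fun i => (a i : ℝ)
  have hw : ‖w‖ = Real.sqrt (∑ i, (a i : ℝ) ^ 2) := by simp [w, EuclideanSpace.norm_eq]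
  have him : 1 ≤ (1 + |s.im|) ^ δ := Real.one_le_rpow (by linarith [abs_nonneg s.im]) hδ.le
  calc _ = ‖𝓕 (bracketPow s : EuclideanSpace ℝ (Fin n) → ℂ) w‖ := by
        rw [← integral_cpow_mul_cexp_eq_fourier_bracketPow]
        push_cast
        rfl
    _ ≤ c * (1 + ‖w‖) ^ (-δ) := hc s (hσK s hs) (hR s hs) w
    _ ≤ max c 1 * (1 + |s.im|) ^ δ * (1 + Real.sqrt (∑ i, (a i : ℝ) ^ 2)) ^ (-δ) := by
        rw [hw]
        gcongr
        exact (le_max_left c 1).trans (le_mul_of_one_le_right (by positivity) him)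

/-- For every `δ > 0` and every compact subset `K` of the half-plane
`Re s > n` there is `c(δ,K) > 0` such that for all `a ∈ ℤ^n` and `s ∈ K`,
`|∫_{ℝ^n} (1+‖x‖²)^(-s/2) e^(-2πi a·x) dx| ≤ c(δ,K) (1+|Im s|)^δ (1+‖a‖)^(-δ)`. -/
theorem stmt4 (n : ℕ) (hn : 1 ≤ n) :
    ∀ δ > (0 : ℝ), ∀ K : Set ℂ, IsCompact K → K ⊆ {s : ℂ | (n : ℝ) < s.re} →
      ∃ c > (0 : ℝ), ∀ (a : Fin n → ℤ), ∀ s ∈ K,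
        ‖∫ x : Fin n → ℝ,
            ((1 + ∑ i, (x i) ^ 2 : ℝ) : ℂ) ^ (-s / 2) *
              Complex.exp (-2 * Real.pi * Complex.I * (∑ i, (a i : ℂ) * (x i : ℂ)))‖
          ≤ c * (1 + |s.im|) ^ δ * (1 + Real.sqrt (∑ i, (a i : ℝ) ^ 2)) ^ (-δ) :=
  stmt4_general n
end

section
/- Let p be a prime and ℓ(x_1,x_2) = a x_1 + b x_2 a linear form with integer coefficients satisfying gcd(a,b) = 1. For all integers α > β ≥ 1, the set {x ∈ ℚ_p² : ‖x‖_p = p^α and |ℓ(x)|_p = p^{α−β}} has Haar measure p^{2α−β}·(1 − 1/p)² = p^{2α−β}(p−1)²/p². -/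
/-!
Since `gcd(a, b) = 1`, the form `ℓ` is the first row of a matrix in `SL₂(ℤ)`, which acts on `ℚ_p²`
as an isometry of the sup norm. As `α - β < α`, it maps the set onto
`{y : |y₁| = p^(α-β), |y₂| = p^α}`. A sphere `|y| = p^k` with `k ≥ 1` is the disjoint union of the
`φ(p^k)` unit balls around the `u / p^k` with `u < p^k` prime to `p`, so the set is a disjoint union
of `φ(p^(α-β)) φ(p^α)` translates of `ℤ_p²`, each of measure one.
-/

open MeasureTheory

open Metric
open scoped Nat

theorem MeasureTheory.Measure.addHaar_biUnion_closedBall {E ι : Type*} [NormedAddCommGroup E]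
    [MeasurableSpace E] [BorelSpace E] (μ : Measure E) [μ.IsAddHaarMeasure] {s : Finset ι}
    {c : ι → E} {r : ℝ} (hs : (s : Set ι).PairwiseDisjoint fun i => closedBall (c i) r) :
    μ (⋃ i ∈ s, closedBall (c i) r) = s.card * μ (closedBall 0 r) := by
  rw [measure_biUnion_finset hs fun i _ => measurableSet_closedBall]
  simp only [μ.addHaar_closedBall_center, Finset.sum_const, nsmul_eq_mul]

theorem max_eq_and_eq_iff_of_lt {α : Type*} [LinearOrder α] {a b r s : α} (hsr : s < r) :
    max a b = r ∧ a = s ↔ a = s ∧ b = r := by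
  rw [max_eq_iff]
  constructor
  · rintro ⟨⟨rfl, -⟩ | ⟨rfl, -⟩, rfl⟩
    exacts [absurd hsr (lt_irrefl _), ⟨rfl, rfl⟩]
  · rintro ⟨rfl, rfl⟩
    exact ⟨Or.inr ⟨rfl, hsr.le⟩, rfl⟩

namespace Nat

def totatives (n : ℕ) : Finset ℕ := (Finset.range n).filter n.Coprime

theorem card_totatives (n : ℕ) : n.totatives.card = φ n :=
  (totient_eq_card_coprime n).symm

theorem cast_totient_prime_pow {p k : ℕ} (hp : p.Prime) (hk : 0 < k) :
    (φ (p ^ k) : ℝ) = (p : ℝ) ^ k * (1 - 1 / p) := by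
  have hp0 : (p : ℝ) ≠ 0 := mod_cast hp.ne_zero
  rw [totient_prime_pow hp hk, cast_mul, cast_sub hp.one_le, cast_pow, ← Nat.sub_add_cancel hk,
    pow_succ]
  field_simp
  simp

end Nat

namespace IsUltrametricDist

theorem norm_eq_iff_of_norm_sub_le {E : Type*} [SeminormedAddCommGroup E] [IsUltrametricDist E]
    {x c : E} {s r : ℝ} (hxc : ‖x - c‖ ≤ s) (hsr : s < r) : ‖x‖ = r ↔ ‖c‖ = r := by
  have key : ∀ {x c : E}, ‖x - c‖ ≤ s → ‖c‖ = r → ‖x‖ = r := fun {x c} hxc hc => by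
    have hlt : ‖x - c‖ < ‖c‖ := hc ▸ hxc.trans_lt hsr
    rw [← sub_add_cancel x c, norm_add_eq_max_of_norm_ne_norm hlt.ne, max_eq_right hlt.le, hc]
  exact ⟨key (norm_sub_rev x c ▸ hxc), key hxc⟩

variable {R : Type*} [NormedCommRing R] [NormOneClass R] [IsUltrametricDist R]

theorem norm_intCast_mul_add_intCast_mul_le (m n : ℤ) (x : R × R) :
    ‖(m : R) * x.1 + n * x.2‖ ≤ ‖x‖ := by
  refine (norm_add_le_max _ _).trans (max_le_max ?_ ?_) <;>
  exact (norm_mul_le _ _).trans (mul_le_of_le_one_left (norm_nonneg _) (norm_intCast_le_one R _))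

/-- The action of the integral matrix `[[a, b], [-B, A]]`, of determinant `A a + B b = 1`. -/
def unimodularAddEquiv (a b A B : ℤ) (h : A * a + B * b = 1) : R × R ≃+ R × R where
  toFun x := ((a : R) * x.1 + (b : R) * x.2, ((-B : ℤ) : R) * x.1 + (A : R) * x.2)
  invFun y := ((A : R) * y.1 + ((-b : ℤ) : R) * y.2, (B : R) * y.1 + (a : R) * y.2)
  left_inv x := by
    ext
    · linear_combination (norm := (push_cast; ring)) x.1 * congrArg (Int.cast : ℤ → R) h
    · linear_combination (norm := (push_cast; ring)) x.2 * congrArg (Int.cast : ℤ → R) h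
  right_inv y := by
    ext
    · linear_combination (norm := (push_cast; ring)) y.1 * congrArg (Int.cast : ℤ → R) h
    · linear_combination (norm := (push_cast; ring)) y.2 * congrArg (Int.cast : ℤ → R) h
  map_add' x y := by ext <;> simp only [Prod.fst_add, Prod.snd_add] <;> ring

variable (a b A B : ℤ) (h : A * a + B * b = 1)

theorem norm_unimodularAddEquiv_le (x : R × R) : ‖unimodularAddEquiv a b A B h x‖ ≤ ‖x‖ :=
  max_le (norm_intCast_mul_add_intCast_mul_le a b x) (norm_intCast_mul_add_intCast_mul_le (-B) A x)

theorem norm_unimodularAddEquiv_symm_le (y : R × R) :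
    ‖(unimodularAddEquiv a b A B h).symm y‖ ≤ ‖y‖ :=
  max_le (norm_intCast_mul_add_intCast_mul_le A (-b) y) (norm_intCast_mul_add_intCast_mul_le B a y)

theorem norm_unimodularAddEquiv (x : R × R) : ‖unimodularAddEquiv a b A B h x‖ = ‖x‖ :=
  (norm_unimodularAddEquiv_le a b A B h x).antisymm <| by
    simpa using norm_unimodularAddEquiv_symm_le a b A B h (unimodularAddEquiv a b A B h x)

def unimodularIsometry : R × R ≃ᵢ R × R where
  toEquiv := (unimodularAddEquiv a b A B h).toEquiv
  isometry_toFun := AddMonoidHomClass.isometry_of_norm (unimodularAddEquiv a b A B h)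
    (norm_unimodularAddEquiv a b A B h)

theorem norm_unimodularIsometry (x : R × R) : ‖unimodularIsometry a b A B h x‖ = ‖x‖ :=
  norm_unimodularAddEquiv a b A B h x

end IsUltrametricDist

namespace Padic

variable {p : ℕ} [hp : Fact p.Prime]

theorem norm_div_p_pow (x : ℚ_[p]) (k : ℕ) : ‖x / (p : ℚ_[p]) ^ k‖ = ‖x‖ * (p : ℝ) ^ k := by
  rw [norm_div, norm_p_pow, zpow_neg, zpow_natCast, div_inv_eq_mul]

theorem exists_norm_sub_natCast_div_p_pow_le {k : ℕ} {y : ℚ_[p]} (hy : ‖y‖ ≤ (p : ℝ) ^ k) :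
    ∃ u < p ^ k, ‖y - u / (p : ℚ_[p]) ^ k‖ ≤ 1 := by
  have hpk : (0 : ℝ) < (p : ℝ) ^ k := pow_pos (mod_cast hp.out.pos) k
  have hz : ‖(p : ℚ_[p]) ^ k * y‖ ≤ 1 := by
    rw [norm_mul, norm_p_pow, zpow_neg, zpow_natCast]
    exact inv_mul_le_one_of_le₀ hy hpk.le
  set z : ℤ_[p] := ⟨(p : ℚ_[p]) ^ k * y, hz⟩
  refine ⟨z.appr k, z.appr_lt k, ?_⟩
  have hdigit : ‖z - z.appr k‖ ≤ (p : ℝ) ^ (-k : ℤ) :=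
    (PadicInt.norm_le_pow_iff_mem_span_pow _ _).2 (z.appr_spec k)
  have hp0 : (p : ℚ_[p]) ^ k ≠ 0 := pow_ne_zero k (mod_cast hp.out.ne_zero)
  have hzy : (z : ℚ_[p]) = (p : ℚ_[p]) ^ k * y := rfl
  rw [show y - z.appr k / (p : ℚ_[p]) ^ k = (z - (z.appr k : ℚ_[p])) / (p : ℚ_[p]) ^ k by
    rw [hzy]; field_simp, ← PadicInt.coe_natCast, ← PadicInt.coe_sub, norm_div_p_pow,
    PadicInt.padic_norm_e_of_padicInt]
  rw [zpow_neg, zpow_natCast] at hdigit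
  exact (le_div_iff₀ hpk).1 (by rwa [div_eq_inv_mul, mul_one])

theorem eq_of_norm_natCast_div_p_pow_sub_le {k u v : ℕ} (hu : u < p ^ k) (hv : v < p ^ k)
    (h : ‖(u : ℚ_[p]) / (p : ℚ_[p]) ^ k - v / (p : ℚ_[p]) ^ k‖ ≤ 1) : u = v := by
  have hpk : (0 : ℝ) < (p : ℝ) ^ k := pow_pos (mod_cast hp.out.pos) k
  rw [← sub_div, norm_div_p_pow, ← le_div_iff₀ hpk, one_div, ← zpow_natCast, ← zpow_neg,
    show (u : ℚ_[p]) - v = ((u - v : ℤ) : ℚ_[p]) by push_cast; ring,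
    norm_int_le_pow_iff_dvd, ← Int.modEq_iff_dvd] at h
  exact (Int.natCast_modEq_iff.1 (mod_cast h.symm)).eq_of_lt_of_lt hu hv

theorem norm_natCast_div_p_pow_eq_iff {k u : ℕ} (hk : 0 < k) :
    ‖(u : ℚ_[p]) / (p : ℚ_[p]) ^ k‖ = (p : ℝ) ^ k ↔ (p ^ k).Coprime u := by
  rw [norm_div_p_pow, mul_eq_right₀ (pow_pos (mod_cast hp.out.pos) k).ne',
    norm_natCast_eq_one_iff, Nat.coprime_pow_left_iff hk]

theorem sphere_eq_biUnion_closedBall {k : ℕ} (hk : 0 < k) :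
    sphere (0 : ℚ_[p]) ((p : ℝ) ^ k) =
      ⋃ u ∈ (p ^ k).totatives, closedBall ((u : ℚ_[p]) / p ^ k) 1 := by
  have h1 : (1 : ℝ) < (p : ℝ) ^ k := one_lt_pow₀ (mod_cast hp.out.one_lt) hk.ne'
  ext y
  simp only [mem_sphere_zero_iff_norm, Set.mem_iUnion, Nat.totatives, Finset.mem_filter,
    Finset.mem_range, mem_closedBall, dist_eq_norm, exists_prop]
  constructor
  · intro hy
    obtain ⟨u, hu, hyu⟩ := exists_norm_sub_natCast_div_p_pow_le hy.le
    refine ⟨u, ⟨hu, ?_⟩, hyu⟩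
    exact (norm_natCast_div_p_pow_eq_iff hk).1
      ((IsUltrametricDist.norm_eq_iff_of_norm_sub_le hyu h1).1 hy)
  · rintro ⟨u, ⟨-, hu⟩, hyu⟩
    exact (IsUltrametricDist.norm_eq_iff_of_norm_sub_le hyu h1).2
      ((norm_natCast_div_p_pow_eq_iff hk).2 hu)

theorem pairwiseDisjoint_closedBall_natCast_div_p_pow (k : ℕ) :
    ((p ^ k).totatives : Set ℕ).PairwiseDisjoint
      fun u => closedBall ((u : ℚ_[p]) / p ^ k) 1 := by
  intro u hu v hv huv
  simp only [Nat.totatives, Finset.coe_filter, Finset.mem_range, Set.mem_ofPred_eq] at hu hv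
  refine Set.disjoint_left.2 fun y hyu hyv => huv ?_
  refine eq_of_norm_natCast_div_p_pow_sub_le hu.1 hv.1 ?_
  rw [← dist_eq_norm]
  exact (IsUltrametricDist.dist_triangle_max _ y _).trans (max_le (by rwa [dist_comm]) hyv)

theorem sphere_prod_sphere_eq_biUnion_closedBall {j k : ℕ} (hj : 0 < j) (hk : 0 < k) :
    sphere (0 : ℚ_[p]) ((p : ℝ) ^ j) ×ˢ sphere (0 : ℚ_[p]) ((p : ℝ) ^ k) =
      ⋃ uv ∈ (p ^ j).totatives ×ˢ (p ^ k).totatives,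
        closedBall (((uv.1 : ℚ_[p]) / p ^ j, (uv.2 : ℚ_[p]) / p ^ k)) 1 := by
  rw [sphere_eq_biUnion_closedBall hj, sphere_eq_biUnion_closedBall hk]
  ext x
  simp only [Set.mem_prod, Set.mem_iUnion, Finset.mem_product, ← closedBall_prod_same,
    exists_prop, Prod.exists]
  constructor
  · rintro ⟨⟨u, hu, hx₁⟩, v, hv, hx₂⟩
    exact ⟨u, v, ⟨hu, hv⟩, hx₁, hx₂⟩
  · rintro ⟨u, v, ⟨hu, hv⟩, hx₁, hx₂⟩
    exact ⟨⟨u, hu, hx₁⟩, v, hv, hx₂⟩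

theorem pairwiseDisjoint_closedBall_prod (j k : ℕ) :
    (((p ^ j).totatives ×ˢ (p ^ k).totatives : Finset (ℕ × ℕ)) : Set (ℕ × ℕ)).PairwiseDisjoint
      fun uv => closedBall (((uv.1 : ℚ_[p]) / p ^ j, (uv.2 : ℚ_[p]) / p ^ k)) 1 := by
  simpa only [Finset.coe_product, closedBall_prod_same] using
    (pairwiseDisjoint_closedBall_natCast_div_p_pow j).prod
      (pairwiseDisjoint_closedBall_natCast_div_p_pow k)

end Padic

/-- Let `p` be a prime, `ℓ(x₁,x₂) = a x₁ + b x₂` a primitive integral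
linear form. For integers `α > β ≥ 1`, the set
`{x ∈ ℚ_p² : ‖x‖_p = p^α, |ℓ(x)|_p = p^(α-β)}` has normalized Haar measure
`p^(2α-β)(1-1/p)²`. -/
theorem stmt7 (p : ℕ) [Fact p.Prime]
    (μ : Measure (ℚ_[p] × ℚ_[p])) (hμ : μ.IsAddHaarMeasure)
    (hμ1 : μ {x | ‖x.1‖ ≤ 1 ∧ ‖x.2‖ ≤ 1} = 1)
    (a b : ℤ) (hab : Int.gcd a b = 1)
    (α β : ℕ) (hβ : 1 ≤ β) (hαβ : β < α) :
    μ {x : ℚ_[p] × ℚ_[p] | max ‖x.1‖ ‖x.2‖ = (p : ℝ) ^ α ∧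
        ‖(a : ℚ_[p]) * x.1 + (b : ℚ_[p]) * x.2‖ = (p : ℝ) ^ (α - β)} =
      ENNReal.ofReal ((p : ℝ) ^ (2 * α - β) * (1 - 1 / p) ^ 2) := by
  have hp : p.Prime := Fact.out
  obtain ⟨A, B, hAB⟩ := Int.isCoprime_iff_gcd_eq_one.2 hab
  set e := IsUltrametricDist.unimodularIsometry (R := ℚ_[p]) a b A B hAB
  have hball : μ (closedBall 0 1) = 1 := by
    rw [← hμ1]
    congr 1
    ext x
    simp [Prod.norm_def]
  calc μ _ = μ (e ⁻¹' (sphere 0 ((p : ℝ) ^ (α - β)) ×ˢ sphere 0 ((p : ℝ) ^ α))) := by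
        congr 1
        ext x
        rw [Set.mem_preimage, Set.mem_prod, mem_sphere_zero_iff_norm, mem_sphere_zero_iff_norm,
          ← max_eq_and_eq_iff_of_lt (pow_lt_pow_right₀ (mod_cast hp.one_lt) (by omega)),
          ← Prod.norm_def, IsUltrametricDist.norm_unimodularIsometry]
        rfl
    _ = μ (⋃ uv ∈ (p ^ (α - β)).totatives ×ˢ (p ^ α).totatives,
          closedBall (e.symm ((uv.1 : ℚ_[p]) / p ^ (α - β), (uv.2 : ℚ_[p]) / p ^ α)) 1) := by
        rw [Padic.sphere_prod_sphere_eq_biUnion_closedBall (by omega) (by omega),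
          Set.preimage_iUnion₂]
        simp only [e.preimage_closedBall]
    _ = (φ (p ^ (α - β)) * φ (p ^ α) : ℕ) := by
        rw [μ.addHaar_biUnion_closedBall, hball, mul_one, Finset.card_product,
          Nat.card_totatives, Nat.card_totatives]
        intro i hi j hj hij
        simpa only [← e.preimage_closedBall] using
          (Padic.pairwiseDisjoint_closedBall_prod (α - β) α hi hj hij).preimage e
    _ = ENNReal.ofReal ((p : ℝ) ^ (2 * α - β) * (1 - 1 / p) ^ 2) := by
        rw [← ENNReal.ofReal_natCast, Nat.cast_mul, Nat.cast_totient_prime_pow hp (by omega),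
          Nat.cast_totient_prime_pow hp (by omega), show 2 * α - β = (α - β) + α by omega, pow_add]
        congr 1
        ring
end

section
/- With r pairwise non-proportional primitive integer linear forms ℓ_1,…,ℓ_r and S as in the context, let p be a prime with p ∉ S. Then for every integer α ≥ 1, the set U(α) = {x ∈ ℚ_p² : ‖x‖_p = p^α and |ℓ_j(x)|_p = p^α for all 1 ≤ j ≤ r} has Haar measure p^{2α−2}·(p−1)·(p+1−r). -/
/-!
If `‖x‖ ≤ p^α`, the open ball of radius `p^α` around `x` is determined by the reduction
`c ∈ 𝔽_p²` of `p^α x ∈ ℤ_p²`. So the closed ball of radius `p^α` is the disjoint union of `p²`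
translates of the closed ball of radius `p^(α-1)`, and has measure `p^(2α)` by induction. On the
ball with residue `c` the ultrametric inequality gives `|ℓ(x)| = p^α` iff `ℓ̄(c) ≠ 0` for every
integral form `ℓ`, and `‖x‖ = p^α` iff `c ≠ 0`. Hence `U(α)` is the union of the balls whose residue
is a nonzero point of `𝔽_p²` on none of the lines `ℓ̄_j = 0`. Primitivity and `p ∉ S` make these
`r` distinct lines through `0`, each with `p - 1` nonzero points, which leaves
`p² - 1 - r(p - 1) = (p - 1)(p + 1 - r)` balls of measure `p^(2α-2)`.
-/

open MeasureTheory

open Finset Metric Module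
open scoped ENNReal

section LinesOverFiniteField

variable {F : Type*} [Field F] [Fintype F] [DecidableEq F]

lemma card_filter_linear_eq_zero {A B : F} (h : (A, B) ≠ 0) :
    #{c : F × F | A * c.1 + B * c.2 = 0} = Fintype.card F := by
  set f : Dual F (F × F) := A • LinearMap.fst F F F + B • LinearMap.snd F F F
  have hf : f ≠ 0 := by
    contrapose! h
    have h1 := LinearMap.congr_fun h (1, 0)
    have h2 := LinearMap.congr_fun h (0, 1)
    simp only [f, LinearMap.add_apply, LinearMap.smul_apply, LinearMap.fst_apply,
      LinearMap.snd_apply, smul_eq_mul, LinearMap.zero_apply] at h1 h2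
    simp_all
  have hker : finrank F (LinearMap.ker f) = 1 := by
    have := Dual.finrank_ker_add_one_of_ne_zero hf
    rw [finrank_prod, finrank_self] at this
    omega
  rw [← Fintype.card_subtype, ← Nat.card_eq_fintype_card, ← Nat.card_eq_fintype_card,
    ← pow_one (Nat.card F), ← hker, ← Module.natCard_eq_pow_finrank]
  exact Nat.card_congr (Equiv.subtypeEquivRight fun c => by simp [f])

lemma card_filter_ne_zero_linear_eq_zero {A B : F} (h : (A, B) ≠ 0) :
    #{c : F × F | c ≠ 0 ∧ A * c.1 + B * c.2 = 0} = Fintype.card F - 1 := by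
  rw [← card_filter_linear_eq_zero h, ← card_erase_of_mem (a := 0) (by simp)]
  congr 1
  ext c
  simp

variable {ι : Type*} [Fintype ι]

def pointsOffLines (A B : ι → F) : Finset (F × F) :=
  {c | c ≠ 0 ∧ ∀ j, A j * c.1 + B j * c.2 ≠ 0}

lemma card_pointsOffLines {A B : ι → F} (hAB : ∀ j, (A j, B j) ≠ 0)
    (hdet : Pairwise fun j k => A j * B k - A k * B j ≠ 0) :
    (#(pointsOffLines A B) : ℝ) = (Fintype.card F - 1) * (Fintype.card F + 1 - Fintype.card ι) := by
  set L : ι → Finset (F × F) := fun j => {c | c ≠ 0 ∧ A j * c.1 + B j * c.2 = 0}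
  have hdisj : Set.PairwiseDisjoint ↑(univ : Finset ι) L := by
    intro j _ k _ hjk
    refine disjoint_left.mpr fun c hj hk => ?_
    simp only [L, mem_filter, mem_univ, true_and] at hj hk
    have h1 : (A j * B k - A k * B j) * c.1 = 0 := by
      linear_combination B k * hj.2 - B j * hk.2
    have h2 : (A j * B k - A k * B j) * c.2 = 0 := by
      linear_combination A j * hk.2 - A k * hj.2
    exact hj.1 (Prod.ext ((mul_eq_zero.mp h1).resolve_left (hdet hjk))
      ((mul_eq_zero.mp h2).resolve_left (hdet hjk)))
  have hsplit := card_filter_add_card_filter_not (s := univ.erase (0 : F × F))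
    (fun c => ∀ j, A j * c.1 + B j * c.2 ≠ 0)
  have hoff : (univ.erase 0).filter (fun c => ∀ j, A j * c.1 + B j * c.2 ≠ 0) =
      pointsOffLines A B := by
    ext c; simp [pointsOffLines, and_comm]
  have hon : (univ.erase 0).filter (fun c => ¬ ∀ j, A j * c.1 + B j * c.2 ≠ 0) =
      univ.biUnion L := by
    ext c; simp [L, and_comm]
  rw [hoff, hon, card_biUnion hdisj, card_erase_of_mem (mem_univ _), card_univ,
    Fintype.card_prod] at hsplit
  simp only [L, card_filter_ne_zero_linear_eq_zero (hAB _), sum_const, card_univ,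
    smul_eq_mul] at hsplit
  have hq : 1 ≤ Fintype.card F := Fintype.card_pos
  have := congrArg (Nat.cast : ℕ → ℝ) hsplit
  push_cast [Nat.cast_sub hq, Nat.cast_sub (Nat.one_le_iff_ne_zero.mpr (mul_pos hq hq).ne')] at this
  linear_combination this

end LinesOverFiniteField

lemma intCast_prod_ne_zero_of_gcd_eq_one {R : Type*} [CommRing R] [Nontrivial R] {a b : ℤ}
    (h : a.gcd b = 1) : ((a : R), (b : R)) ≠ 0 := by
  intro h0
  have hc : IsCoprime (a : R) (b : R) := (Int.isCoprime_iff_gcd_eq_one.mpr h).intCast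
  rw [Prod.mk_eq_zero] at h0
  rw [h0.1, h0.2] at hc
  exact not_isCoprime_zero_zero hc

instance Prod.isUltrametricDist {X Y : Type*} [PseudoMetricSpace X] [PseudoMetricSpace Y]
    [IsUltrametricDist X] [IsUltrametricDist Y] : IsUltrametricDist (X × Y) where
  dist_triangle_max x y z := by
    simp only [Prod.dist_eq]
    exact max_le ((dist_triangle_max _ y.1 _).trans (max_le_max (le_max_left ..) (le_max_left ..)))
      ((dist_triangle_max _ y.2 _).trans (max_le_max (le_max_right ..) (le_max_right ..)))

lemma IsUltrametricDist.norm_lt_iff_of_norm_sub_lt {E : Type*} [SeminormedAddCommGroup E]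
    [IsUltrametricDist E] {u v : E} {R : ℝ} (h : ‖u - v‖ < R) : ‖u‖ < R ↔ ‖v‖ < R := by
  have := ball_eq_of_mem (x := v) (y := u) (by rwa [mem_ball, dist_eq_norm])
  simpa [mem_ball, dist_eq_norm] using (Set.ext_iff.mp this 0).symm

namespace Padic

variable {p : ℕ} [Fact p.Prime]

lemma natCast_pow_pos (n : ℕ) : 0 < (p : ℝ) ^ n := by
  have := (Fact.out : p.Prime).pos
  positivity

lemma norm_le_pow_iff_norm_lt_pow_succ (x : ℚ_[p]) (n : ℕ) :
    ‖x‖ ≤ (p : ℝ) ^ n ↔ ‖x‖ < (p : ℝ) ^ (n + 1) := by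
  exact_mod_cast norm_le_pow_iff_norm_lt_pow_add_one x n

lemma norm_inv_pow_mul (n : ℕ) (u : ℚ_[p]) : ‖((p : ℚ_[p]) ^ n)⁻¹ * u‖ = (p : ℝ) ^ n * ‖u‖ := by
  rw [norm_mul, norm_inv, norm_pow, norm_p, inv_pow, inv_inv]

lemma norm_inv_pow_mul_intCast_lt_iff (n : ℕ) (k : ℤ) :
    ‖((p : ℚ_[p]) ^ n)⁻¹ * k‖ < (p : ℝ) ^ n ↔ (k : ZMod p) = 0 := by
  rw [norm_inv_pow_mul, mul_lt_iff_lt_one_right (natCast_pow_pos n),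
    norm_intCast_lt_one_iff, ZMod.intCast_zmod_eq_zero_iff_dvd]

lemma exists_norm_sub_inv_pow_mul_val_lt {n : ℕ} {t : ℚ_[p]} (ht : ‖t‖ ≤ (p : ℝ) ^ n) :
    ∃ d : ZMod p, ‖t - ((p : ℚ_[p]) ^ n)⁻¹ * (d.val : ℤ)‖ < (p : ℝ) ^ n := by
  have hpn := natCast_pow_pos (p := p) n
  set y := (p : ℚ_[p]) ^ n * t
  have hty : t = ((p : ℚ_[p]) ^ n)⁻¹ * y := by
    rw [inv_mul_cancel_left₀ (pow_ne_zero _ (Nat.cast_ne_zero.mpr (Fact.out : p.Prime).ne_zero))]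
  rw [hty, norm_inv_pow_mul, mul_le_iff_le_one_right hpn] at ht
  obtain ⟨k, hkp, hk⟩ := PadicInt.exists_mem_range ⟨y, ht⟩
  refine ⟨k, ?_⟩
  rw [ZMod.val_natCast_of_lt hkp, Int.cast_natCast, hty, ← mul_sub, norm_inv_pow_mul,
    mul_lt_iff_lt_one_right hpn]
  exact PadicInt.mem_nonunits.mp hk

variable (p) in
/-- `ball (residueCenter p n c) (p ^ n)` consists of the `x` with `‖x‖ ≤ p ^ n` for which
`p ^ n • x ∈ ℤ_p²` reduces to `c` modulo `p`. -/
noncomputable def residueCenter (n : ℕ) (c : ZMod p × ZMod p) : ℚ_[p] × ℚ_[p] :=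
  (((p : ℚ_[p]) ^ n)⁻¹ * (c.1.val : ℤ), ((p : ℚ_[p]) ^ n)⁻¹ * (c.2.val : ℤ))

lemma norm_intCast_mul_add_le (a b : ℤ) (x : ℚ_[p] × ℚ_[p]) :
    ‖(a : ℚ_[p]) * x.1 + b * x.2‖ ≤ ‖x‖ :=
  (IsUltrametricDist.norm_add_le_max _ _).trans <| max_le_max
    ((norm_mul_le _ _).trans (mul_le_of_le_one_left (norm_nonneg _) (norm_int_le_one a)))
    ((norm_mul_le _ _).trans (mul_le_of_le_one_left (norm_nonneg _) (norm_int_le_one b)))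

lemma exists_mem_ball_residueCenter {n : ℕ} {x : ℚ_[p] × ℚ_[p]} (hx : ‖x‖ ≤ (p : ℝ) ^ n) :
    ∃ c, x ∈ ball (residueCenter p n c) ((p : ℝ) ^ n) := by
  obtain ⟨c₁, h₁⟩ := exists_norm_sub_inv_pow_mul_val_lt ((norm_fst_le x).trans hx)
  obtain ⟨c₂, h₂⟩ := exists_norm_sub_inv_pow_mul_val_lt ((norm_snd_le x).trans hx)
  refine ⟨(c₁, c₂), ?_⟩
  rw [mem_ball, Prod.dist_eq, max_lt_iff, dist_eq_norm, dist_eq_norm]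
  exact ⟨h₁, h₂⟩

lemma norm_residueCenter_le (n : ℕ) (c : ZMod p × ZMod p) :
    ‖residueCenter p n c‖ ≤ (p : ℝ) ^ n := by
  simp only [residueCenter, Prod.norm_def, norm_inv_pow_mul]
  exact max_le (mul_le_of_le_one_right (natCast_pow_pos n).le (norm_int_le_one _))
    (mul_le_of_le_one_right (natCast_pow_pos n).le (norm_int_le_one _))

lemma norm_residueCenter_lt_iff (n : ℕ) (c : ZMod p × ZMod p) :
    ‖residueCenter p n c‖ < (p : ℝ) ^ n ↔ c = 0 := by
  simp only [residueCenter, Prod.norm_def, max_lt_iff, norm_inv_pow_mul_intCast_lt_iff]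
  simp only [Int.cast_natCast, ZMod.natCast_zmod_val, Prod.ext_iff, Prod.fst_zero, Prod.snd_zero]

lemma norm_le_of_mem_ball_residueCenter {n : ℕ} {c : ZMod p × ZMod p} {x : ℚ_[p] × ℚ_[p]}
    (hx : x ∈ ball (residueCenter p n c) ((p : ℝ) ^ n)) : ‖x‖ ≤ (p : ℝ) ^ n := by
  rw [mem_ball, dist_eq_norm] at hx
  calc ‖x‖ = ‖(x - residueCenter p n c) + residueCenter p n c‖ := by rw [sub_add_cancel]
    _ ≤ _ := (IsUltrametricDist.norm_add_le_max _ _).trans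
      (max_le hx.le (norm_residueCenter_le n c))

lemma pairwise_disjoint_ball_residueCenter (n : ℕ) :
    Pairwise fun c c' : ZMod p × ZMod p => Disjoint (ball (residueCenter p n c) ((p : ℝ) ^ n))
      (ball (residueCenter p n c') ((p : ℝ) ^ n)) := by
  intro c c' hne
  refine (IsUltrametricDist.ball_eq_or_disjoint _ _ _).resolve_left fun h => hne ?_
  have : residueCenter p n c' ∈ ball (residueCenter p n c) ((p : ℝ) ^ n) :=
    h ▸ mem_ball_self (natCast_pow_pos n)
  rw [mem_ball, Prod.dist_eq, max_lt_iff, dist_eq_norm, dist_eq_norm] at this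
  simp only [residueCenter, ← mul_sub, ← Int.cast_sub, norm_inv_pow_mul_intCast_lt_iff] at this
  simp only [Int.cast_sub, Int.cast_natCast, ZMod.natCast_zmod_val, sub_eq_zero] at this
  exact Prod.ext this.1.symm this.2.symm

lemma closedBall_eq_iUnion_ball_residueCenter (n : ℕ) :
    closedBall (0 : ℚ_[p] × ℚ_[p]) ((p : ℝ) ^ n) =
      ⋃ c, ball (residueCenter p n c) ((p : ℝ) ^ n) := by
  ext x
  simp only [mem_closedBall_zero_iff, Set.mem_iUnion]
  exact ⟨exists_mem_ball_residueCenter, fun ⟨_, hc⟩ => norm_le_of_mem_ball_residueCenter hc⟩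

lemma norm_lt_iff_of_mem_ball_residueCenter {n : ℕ} {c : ZMod p × ZMod p} {x : ℚ_[p] × ℚ_[p]}
    (hx : x ∈ ball (residueCenter p n c) ((p : ℝ) ^ n)) : ‖x‖ < (p : ℝ) ^ n ↔ c = 0 := by
  rw [mem_ball, dist_eq_norm] at hx
  rw [IsUltrametricDist.norm_lt_iff_of_norm_sub_lt hx, norm_residueCenter_lt_iff]

lemma norm_intCast_mul_add_lt_iff_of_mem_ball_residueCenter (a b : ℤ) {n : ℕ}
    {c : ZMod p × ZMod p} {x : ℚ_[p] × ℚ_[p]} (hx : x ∈ ball (residueCenter p n c) ((p : ℝ) ^ n)) :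
    ‖(a : ℚ_[p]) * x.1 + b * x.2‖ < (p : ℝ) ^ n ↔ (a : ZMod p) * c.1 + b * c.2 = 0 := by
  rw [mem_ball, dist_eq_norm] at hx
  have hdiff := (norm_intCast_mul_add_le a b _).trans_lt hx
  have hcenter : (a : ℚ_[p]) * (residueCenter p n c).1 + b * (residueCenter p n c).2 =
      ((p : ℚ_[p]) ^ n)⁻¹ * ((a * c.1.val + b * c.2.val : ℤ) : ℚ_[p]) := by
    simp only [residueCenter]; push_cast; ring
  rw [Prod.fst_sub, Prod.snd_sub, mul_sub, mul_sub, sub_add_sub_comm] at hdiff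
  rw [IsUltrametricDist.norm_lt_iff_of_norm_sub_lt hdiff, hcenter,
    norm_inv_pow_mul_intCast_lt_iff]
  simp

lemma ball_pow_succ_eq_closedBall (x : ℚ_[p] × ℚ_[p]) (n : ℕ) :
    ball x ((p : ℝ) ^ (n + 1)) = closedBall x ((p : ℝ) ^ n) := by
  ext y
  rw [mem_ball, mem_closedBall, Prod.dist_eq, max_lt_iff, max_le_iff, dist_eq_norm,
    dist_eq_norm, norm_le_pow_iff_norm_lt_pow_succ, norm_le_pow_iff_norm_lt_pow_succ]

lemma addHaar_closedBall_pow (μ : Measure (ℚ_[p] × ℚ_[p])) [μ.IsAddHaarMeasure]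
    (hμ : μ (closedBall 0 1) = 1) (n : ℕ) :
    μ (closedBall 0 ((p : ℝ) ^ n)) = (p : ℝ≥0∞) ^ (2 * n) := by
  induction n with
  | zero => simpa using hμ
  | succ n ih =>
    rw [closedBall_eq_iUnion_ball_residueCenter, measure_iUnion
      (pairwise_disjoint_ball_residueCenter _) (fun _ => measurableSet_ball), tsum_fintype]
    simp_rw [Measure.addHaar_ball_center, ball_pow_succ_eq_closedBall, ih]
    rw [Finset.sum_const, Finset.card_univ, Fintype.card_prod, ZMod.card, nsmul_eq_mul]
    push_cast
    ring

lemma setOf_norm_eq_pow_eq_biUnion_pointsOffLines {ι : Type*} [Fintype ι] (n : ℕ)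
    (a b : ι → ℤ) :
    {x : ℚ_[p] × ℚ_[p] | ‖x‖ = (p : ℝ) ^ n ∧ ∀ j, ‖(a j : ℚ_[p]) * x.1 + b j * x.2‖ = (p : ℝ) ^ n} =
      ⋃ c ∈ pointsOffLines (fun j => (a j : ZMod p)) (fun j => (b j : ZMod p)),
        ball (residueCenter p n c) ((p : ℝ) ^ n) := by
  ext x
  simp only [pointsOffLines, Set.mem_ofPred_eq, Set.mem_iUnion, mem_filter, mem_univ, true_and,
    exists_prop]
  constructor
  · rintro ⟨hx, hforms⟩
    obtain ⟨c, hc⟩ := exists_mem_ball_residueCenter hx.le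
    refine ⟨c, ⟨?_, fun j => ?_⟩, hc⟩
    · rw [Ne, ← norm_lt_iff_of_mem_ball_residueCenter hc, hx]
      exact lt_irrefl _
    · rw [Ne, ← norm_intCast_mul_add_lt_iff_of_mem_ball_residueCenter (a j) (b j) hc, hforms j]
      exact lt_irrefl _
  · rintro ⟨c, ⟨hc0, hcj⟩, hc⟩
    have hle := norm_le_of_mem_ball_residueCenter hc
    refine ⟨hle.antisymm ?_, fun j => ((norm_intCast_mul_add_le _ _ x).trans hle).antisymm ?_⟩
    · exact not_lt.mp ((norm_lt_iff_of_mem_ball_residueCenter hc).not.mpr hc0)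
    · exact not_lt.mp
        ((norm_intCast_mul_add_lt_iff_of_mem_ball_residueCenter _ _ hc).not.mpr (hcj j))

end Padic

open Padic in
theorem stmt9_general (r : ℕ) (a b : Fin r → ℤ)
    (hprim : ∀ k, Int.gcd (a k) (b k) = 1)
    (p : ℕ) [Fact p.Prime]
    (hpS : ∀ j k, j ≠ k → ¬ ((p : ℤ) ∣ (a j * b k - a k * b j)))
    (μ : Measure (ℚ_[p] × ℚ_[p])) (hμ : μ.IsAddHaarMeasure)
    (hμ1 : μ {x | ‖x.1‖ ≤ 1 ∧ ‖x.2‖ ≤ 1} = 1)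
    (α : ℕ) (hα : 1 ≤ α) :
    μ {x : ℚ_[p] × ℚ_[p] | max ‖x.1‖ ‖x.2‖ = (p : ℝ) ^ α ∧
        ∀ j, ‖(a j : ℚ_[p]) * x.1 + (b j : ℚ_[p]) * x.2‖ = (p : ℝ) ^ α} =
      ENNReal.ofReal ((p : ℝ) ^ (2 * α - 2) * (p - 1) * (p + 1 - r)) := by
  obtain ⟨m, rfl⟩ : ∃ m, α = m + 1 := ⟨α - 1, by omega⟩
  have hball : μ (closedBall 0 1) = 1 := by
    rw [← hμ1]
    congr 1
    ext x
    simp [Prod.norm_def]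
  have hdet : Pairwise fun j k => (a j : ZMod p) * b k - a k * b j ≠ 0 := fun j k hjk => by
    simpa using (ZMod.intCast_zmod_eq_zero_iff_dvd _ p).not.mpr (hpS j k hjk)
  have hcard := card_pointsOffLines (fun j => intCast_prod_ne_zero_of_gcd_eq_one (hprim j)) hdet
  rw [ZMod.card, Fintype.card_fin] at hcard
  change μ {x | ‖x‖ = _ ∧ _} = _
  rw [setOf_norm_eq_pow_eq_biUnion_pointsOffLines, measure_biUnion_finset
    ((pairwise_disjoint_ball_residueCenter _).set_pairwise _) (fun _ _ => measurableSet_ball)]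
  simp_rw [Measure.addHaar_ball_center, ball_pow_succ_eq_closedBall, addHaar_closedBall_pow μ hball]
  rw [sum_const, nsmul_eq_mul, show 2 * (m + 1) - 2 = 2 * m by omega, mul_assoc, ← hcard, mul_comm,
    ENNReal.ofReal_mul (by positivity), ENNReal.ofReal_pow (Nat.cast_nonneg _),
    ENNReal.ofReal_natCast, ENNReal.ofReal_natCast]

/-- Let `ℓ_k(x₁,x₂) = a_k x₁ + b_k x₂` (`1 ≤ k ≤ r`) be pairwise
non-proportional primitive integral linear forms and `p` a prime of good reduction
(dividing none of the determinants `a_j b_k − a_k b_j`, `j ≠ k`). For every `α ≥ 1`,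
the set `U(α) = {x ∈ ℚ_p² : ‖x‖_p = p^α, |ℓ_j(x)|_p = p^α for all j}` has normalized
Haar measure `p^(2α−2)(p−1)(p+1−r)`. -/
theorem stmt9 (r : ℕ) (hr : 1 ≤ r) (a b : Fin r → ℤ)
    (hprim : ∀ k, Int.gcd (a k) (b k) = 1)
    (hnonprop : ∀ j k, j ≠ k → a j * b k - a k * b j ≠ 0)
    (p : ℕ) [Fact p.Prime]
    (hpS : ∀ j k, j ≠ k → ¬ ((p : ℤ) ∣ (a j * b k - a k * b j)))
    (μ : Measure (ℚ_[p] × ℚ_[p])) (hμ : μ.IsAddHaarMeasure)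
    (hμ1 : μ {x | ‖x.1‖ ≤ 1 ∧ ‖x.2‖ ≤ 1} = 1)
    (α : ℕ) (hα : 1 ≤ α) :
    μ {x : ℚ_[p] × ℚ_[p] | max ‖x.1‖ ‖x.2‖ = (p : ℝ) ^ α ∧
        ∀ j, ‖(a j : ℚ_[p]) * x.1 + (b j : ℚ_[p]) * x.2‖ = (p : ℝ) ^ α} =
      ENNReal.ofReal ((p : ℝ) ^ (2 * α - 2) * (p - 1) * (p + 1 - r)) :=
  stmt9_general r a b hprim p hpS μ hμ hμ1 α hα
end
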